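/- arXiv:2408.12049 — 9 statements merged into one kernel-verified Lean document; each statement's English description precedes it below -/
import Mathlib

section
/- Let α_1,…,α_n be distinct elements of F_q^*, let G(x)=∏_{i=1}^n (x−α_i)=x^n+d_{n−1}x^{n−1}+⋯+d_1x+d_0, let u_i=1/G'(α_i), and let G_h(x)=∑_{j=0}^h d_j x^j. For 1≤i≤n let f_i(x)=∏_{j≠i}(x−α_j)/∏_{j≠i}(α_i−α_j) be the i-th Lagrange interpolation basis polynomial at the nodes α_1,…,α_n. Then for every 0≤h≤n−1, the coefficient of x^h in f_i(x) equals −(u_i/α_i^{h+1})·G_h(α_i). -/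
open Polynomial Finset Matrix

private lemma tele {F : Type*} [Field F] (a : F) (q : F[X]) (h : ℕ) :
    ∑ j ∈ Finset.range (h + 1), ((X - C a) * q).coeff j * a ^ j
      = -(a ^ (h + 1)) * q.coeff h := by
  induction h with
  | zero => simp [mul_coeff_zero]; try ring
  | succ k ih =>
    rw [Finset.sum_range_succ, ih, mul_comm (X - C a) q, coeff_mul_X_sub_C]
    ring

/-- The coefficient of `x^h` in the `i`-th Lagrange interpolation basis polynomial at
distinct nonzero nodes `α 1, …, α n` equals `-(u i / α i ^ (h+1)) * G_h(α i)`, where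
`G_h` is the degree-`≤ h` truncation of `G = ∏ (X - α i)` and `u i = 1 / G'(α i)`. -/
theorem stmt_1 {F : Type*} [Field F] [Fintype F] {n : ℕ}
    (α : Fin n → F) (hα : Function.Injective α) (hα0 : ∀ i, α i ≠ 0)
    (G : F[X]) (hG : G = ∏ i : Fin n, (X - C (α i)))
    (u : Fin n → F) (hu : ∀ i, u i = ((Polynomial.derivative G).eval (α i))⁻¹)
    (i h : Fin n) :
    (Lagrange.basis Finset.univ α i).coeff (h : ℕ) =
      -(u i / α i ^ ((h : ℕ) + 1)) *
        ∑ j ∈ Finset.range ((h : ℕ) + 1), G.coeff j * α i ^ j := by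
  have hGn : G = Lagrange.nodal Finset.univ α := by rw [hG, Lagrange.nodal_eq]
  set w := Lagrange.nodalWeight Finset.univ α i with hw
  have hwu : w = u i := by
    rw [hu, hGn, hw, Lagrange.nodalWeight_eq_eval_derivative_nodal (Finset.mem_univ i)]
  have hkey : C w * G = (X - C (α i)) * Lagrange.basis Finset.univ α i := by
    rw [hGn, Lagrange.nodal_eq_mul_nodal_erase (Finset.mem_univ i),
      Lagrange.basis_eq_prod_sub_inv_mul_nodal_div (Finset.mem_univ i),
      ← Lagrange.nodal_erase_eq_nodal_div (Finset.mem_univ i)]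
    ring
  have hsum : w * ∑ j ∈ Finset.range ((h : ℕ) + 1), G.coeff j * α i ^ j
      = -(α i ^ ((h : ℕ) + 1)) * (Lagrange.basis Finset.univ α i).coeff (h : ℕ) := by
    rw [Finset.mul_sum]
    calc ∑ j ∈ Finset.range ((h : ℕ) + 1), w * (G.coeff j * α i ^ j)
        = ∑ j ∈ Finset.range ((h : ℕ) + 1), ((C w * G).coeff j) * α i ^ j := by
          simp [coeff_C_mul, mul_assoc]
      _ = ∑ j ∈ Finset.range ((h : ℕ) + 1),
            (((X - C (α i)) * Lagrange.basis Finset.univ α i).coeff j) * α i ^ j := by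
          rw [hkey]
      _ = _ := tele (α i) _ _
  have hpow : (α i) ^ ((h : ℕ) + 1) ≠ 0 := pow_ne_zero _ (hα0 i)
  rw [hwu] at hsum
  field_simp
  linear_combination hsum
end

section
/- Let α_1,…,α_n be distinct elements of F_q with α_1=0. Let G(x)=∏_{i=1}^n (x−α_i), u_j=1/G'(α_j) for 1≤j≤n, and w_t=∑_{j=1}^n u_j α_j^t; let g(x)=∏_{i=2}^n (x−α_i), u'_i=1/g'(α_i) for 2≤i≤n, and w'_t=∑_{i=2}^n u'_i α_i^t. Then w'_t = w_{t+1} for every natural number t. -/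
open Polynomial Finset Matrix

/-- If `α_1 = 0` and `α_1, …, α_n` are distinct, then the power sums `w'_t` formed with
the nodes `α_2, …, α_n` (and `g = ∏_{i≥2} (X - α_i)`) satisfy `w'_t = w_{t+1}` for the
power sums `w_t` formed with all nodes and `G = ∏ (X - α_i)`. -/
theorem stmt_5 {F : Type*} [Field F] [Fintype F] {m : ℕ}
    (α : Fin (m + 1) → F) (hα : Function.Injective α) (h0 : α 0 = 0)
    (G : F[X]) (hG : G = ∏ i : Fin (m + 1), (X - C (α i)))
    (u : Fin (m + 1) → F) (hu : ∀ j, u j = ((Polynomial.derivative G).eval (α j))⁻¹)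
    (w : ℕ → F) (hw : ∀ t, w t = ∑ j : Fin (m + 1), u j * α j ^ t)
    (g : F[X]) (hg : g = ∏ i : Fin m, (X - C (α i.succ)))
    (u' : Fin m → F) (hu' : ∀ i, u' i = ((Polynomial.derivative g).eval (α i.succ))⁻¹)
    (w' : ℕ → F) (hw' : ∀ t, w' t = ∑ i : Fin m, u' i * α i.succ ^ t)
    (t : ℕ) :
    w' t = w (t + 1) := by
  have hαne : ∀ i : Fin m, α i.succ ≠ 0 := by
    intro i h
    exact (Fin.succ_ne_zero i) (hα (h.trans h0.symm))
  have hGg : G = X * g := by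
    rw [hG, Fin.prod_univ_succ, h0, map_zero, sub_zero, hg]
  have hgroot : ∀ i : Fin m, g.eval (α i.succ) = 0 := by
    intro i
    rw [hg, eval_prod]
    apply Finset.prod_eq_zero (mem_univ i)
    simp
  have hder : ∀ i : Fin m, (Polynomial.derivative G).eval (α i.succ)
      = α i.succ * (Polynomial.derivative g).eval (α i.succ) := by
    intro i
    rw [hGg, derivative_mul, derivative_X, one_mul]
    simp [hgroot i]
  rw [hw, hw', Fin.sum_univ_succ, h0]
  simp only [zero_pow (Nat.succ_ne_zero t), mul_zero, zero_add]
  apply Finset.sum_congr rfl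
  intro i _
  rw [hu, hu', hder i, mul_inv, pow_succ,
    mul_comm ((α i.succ)⁻¹), mul_assoc, mul_comm (α i.succ ^ t),
    ← mul_assoc ((α i.succ)⁻¹), inv_mul_cancel₀ (hαne i), one_mul]
end

section
/- Let α_1,…,α_n be distinct elements of F_q and let G(x)=∏_{i=1}^n (x−α_i)=x^n+c_1x^{n−1}+⋯+c_{n−1}x+c_n. Set u_j=1/G'(α_j) and w_t=∑_{j=1}^n u_j α_j^t. Then the n×n lower-triangular Toeplitz matrix T with (r,s) entry c_{r−s} for r≥s and 0 for r<s (rows and columns indexed 0,…,n−1, with c_0=1) is invertible, and its inverse is the lower-triangular Toeplitz matrix with (r,s) entry w_{n−1+r−s} for r≥s and 0 for r<s. -/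
open Polynomial Finset Matrix

/-- The lower-triangular Toeplitz matrix of the descending coefficients `c_j` of
`G = ∏ (X - α_i)` (with `c_0 = 1`) is invertible, with inverse the lower-triangular
Toeplitz matrix with entries `w_{n-1+r-s}`, where `w_t = ∑ u_j α_j^t`, `u_j = 1/G'(α_j)`. -/
theorem stmt_8 {F : Type*} [Field F] [Fintype F] {n : ℕ}
    (α : Fin n → F) (hα : Function.Injective α)
    (G : F[X]) (hG : G = ∏ i : Fin n, (X - C (α i)))
    (c : ℕ → F) (hc : ∀ j ≤ n, c j = G.coeff (n - j))
    (u : Fin n → F) (hu : ∀ j, u j = ((Polynomial.derivative G).eval (α j))⁻¹)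
    (w : ℕ → F) (hw : ∀ t, w t = ∑ j : Fin n, u j * α j ^ t)
    (T T' : Matrix (Fin n) (Fin n) F)
    (hT : ∀ r s : Fin n, T r s = if (s : ℕ) ≤ (r : ℕ) then c ((r : ℕ) - (s : ℕ)) else 0)
    (hT' : ∀ r s : Fin n, T' r s =
      if (s : ℕ) ≤ (r : ℕ) then w (n - 1 + ((r : ℕ) - (s : ℕ))) else 0) :
    T * T' = 1 ∧ T' * T = 1 := by
  rcases Nat.eq_zero_or_pos n with hn0 | hn0
  · subst hn0
    exact ⟨Subsingleton.elim _ _, Subsingleton.elim _ _⟩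
  have hinj : Set.InjOn α (univ : Finset (Fin n)) := fun a _ b _ h => hα h
  have hGn : G = Lagrange.nodal univ α := by rw [hG, Lagrange.nodal_eq]
  have hGdeg : G.natDegree = n := by
    rw [hGn, Lagrange.natDegree_nodal, card_univ, Fintype.card_fin]
  have hGmonic : G.Monic := by rw [hGn]; exact Lagrange.nodal_monic
  have hu' : ∀ j, u j = Lagrange.nodalWeight univ α j := by
    intro j
    rw [hu, Lagrange.nodalWeight_eq_eval_derivative_nodal (mem_univ j), hGn]
  -- key: moments of the weights
  have key : ∀ t, t ≤ n - 1 → (∑ j : Fin n, u j * α j ^ t) = if t = n - 1 then 1 else 0 := by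
    intro t ht
    have htn : t < n := by omega
    have hdeg : (X ^ t : F[X]).degree < (#(univ : Finset (Fin n)) : ℕ) := by
      rw [degree_X_pow, card_univ, Fintype.card_fin]
      exact_mod_cast htn
    have hI := Lagrange.eq_interpolate (f := (X ^ t : F[X])) hinj hdeg
    have hC := congrArg (fun p => Polynomial.coeff p (n - 1)) hI
    simp only [Lagrange.interpolate_eq_nodalWeight_mul_nodal_div_X_sub_C,
      finset_sum_coeff, coeff_X_pow] at hC
    have herase : ∀ i : Fin n,
        (Lagrange.nodal univ α / (X - C (α i))) = Lagrange.nodal ((univ : Finset (Fin n)).erase i) α := by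
      intro i
      rw [Lagrange.nodal_eq_mul_nodal_erase (mem_univ i)]
      exact mul_div_cancel_left₀ _ (X_sub_C_ne_zero (α i))
    have hterm : ∀ i : Fin n,
        (C (Lagrange.nodalWeight univ α i) * (Lagrange.nodal univ α / (X - C (α i))) *
          C (eval (α i) (X ^ t : F[X]))).coeff (n - 1)
          = Lagrange.nodalWeight univ α i * α i ^ t := by
      intro i
      rw [herase i, coeff_mul_C, coeff_C_mul]
      have hmon : (Lagrange.nodal ((univ : Finset (Fin n)).erase i) α).Monic :=
        Lagrange.nodal_monic
      have hnd : (Lagrange.nodal ((univ : Finset (Fin n)).erase i) α).natDegree = n - 1 := by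
        rw [Lagrange.natDegree_nodal, card_erase_of_mem (mem_univ i), card_univ,
          Fintype.card_fin]
      rw [show (n - 1) = (Lagrange.nodal ((univ : Finset (Fin n)).erase i) α).natDegree from hnd.symm,
        hmon.coeff_natDegree]
      simp
    rw [Finset.sum_congr rfl (fun i _ => hterm i)] at hC
    have : (∑ j : Fin n, u j * α j ^ t) = ∑ i : Fin n, Lagrange.nodalWeight univ α i * α i ^ t := by
      exact Finset.sum_congr rfl fun j _ => by rw [hu']
    rw [this, ← hC]
    by_cases h : t = n - 1 <;> simp [h, eq_comm]
  have hw0 : ∀ t, t < n - 1 → w t = 0 := by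
    intro t ht
    rw [hw, key t (le_of_lt ht)]
    simp [Nat.ne_of_lt ht]
  have hwtop : w (n - 1) = 1 := by
    rw [hw, key (n - 1) le_rfl]
    simp
  have c0 : c 0 = 1 := by
    rw [hc 0 (Nat.zero_le n)]
    simpa [Nat.sub_zero, ← hGdeg] using hGmonic.coeff_natDegree
  have Groot : ∀ j : Fin n, G.eval (α j) = 0 := by
    intro j
    rw [hG, eval_prod]
    exact Finset.prod_eq_zero (mem_univ j) (by simp)
  have Geval : ∀ x : F, G.eval x = ∑ k ∈ range (n + 1), c k * x ^ (n - k) := by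
    intro x
    rw [eval_eq_sum_range, hGdeg]
    rw [← Finset.sum_range_reflect (fun i => G.coeff i * x ^ i) (n + 1)]
    refine Finset.sum_congr rfl fun k hk => ?_
    have hk' : k ≤ n := by simpa [Nat.lt_succ_iff] using hk
    rw [hc k hk']
    congr 1 <;> omega
  -- the convolution identity
  have L : ∀ d, d ≤ n - 1 →
      (∑ k ∈ range (d + 1), c k * w (n - 1 + (d - k))) = if d = 0 then 1 else 0 := by
    intro d hd
    rcases Nat.eq_zero_or_pos d with hd0 | hd0
    · subst hd0
      simp [c0, hwtop]
    · have full : ∑ k ∈ range (n + 1), c k * (∑ j : Fin n, u j * α j ^ (d - 1 + (n - k))) = 0 := by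
        have step : ∀ k ∈ range (n + 1),
            c k * (∑ j : Fin n, u j * α j ^ (d - 1 + (n - k)))
              = ∑ j : Fin n, (u j * α j ^ (d - 1)) * (c k * α j ^ (n - k)) := by
          intro k hk
          rw [Finset.mul_sum]
          refine Finset.sum_congr rfl fun j _ => ?_
          rw [pow_add]; ring
        rw [Finset.sum_congr rfl step, Finset.sum_comm]
        refine Finset.sum_eq_zero fun j _ => ?_
        rw [← Finset.mul_sum, ← Geval, Groot, mul_zero]
      have tail : ∑ k ∈ Ico (d + 1) (n + 1), c k * (∑ j : Fin n, u j * α j ^ (d - 1 + (n - k))) = 0 := by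
        refine Finset.sum_eq_zero fun k hk => ?_
        rw [mem_Ico] at hk
        have h1 : d - 1 + (n - k) ≤ n - 1 := by omega
        rw [key _ h1, if_neg (by omega), mul_zero]
      have split : (∑ k ∈ range (d + 1), c k * (∑ j : Fin n, u j * α j ^ (d - 1 + (n - k))))
          + ∑ k ∈ Ico (d + 1) (n + 1), c k * (∑ j : Fin n, u j * α j ^ (d - 1 + (n - k)))
          = ∑ k ∈ range (n + 1), c k * (∑ j : Fin n, u j * α j ^ (d - 1 + (n - k))) := by
        simp only [range_eq_Ico]
        exact Finset.sum_Ico_consecutive _ (by omega) (by omega)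
      have main : ∑ k ∈ range (d + 1), c k * w (n - 1 + (d - k))
          = ∑ k ∈ range (d + 1), c k * (∑ j : Fin n, u j * α j ^ (d - 1 + (n - k))) := by
        refine Finset.sum_congr rfl fun k hk => ?_
        rw [mem_range] at hk
        have he : n - 1 + (d - k) = d - 1 + (n - k) := by omega
        rw [hw, he]
      rw [main, if_neg (by omega)]
      have := split
      rw [tail, add_zero, full] at this
      exact this
  -- main matrix computation
  have hmul : T * T' = 1 := by
    ext r s
    rw [Matrix.mul_apply, Matrix.one_apply]
    by_cases hrs : (s : ℕ) ≤ (r : ℕ)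
    · have hdlt : (r : ℕ) - (s : ℕ) ≤ n - 1 := by have := r.isLt; omega
      have step1 : ∀ m : Fin n, T r m * T' m s =
          (fun m : ℕ => if (s : ℕ) ≤ m ∧ m ≤ (r : ℕ)
            then c ((r : ℕ) - m) * w (n - 1 + (m - (s : ℕ))) else 0) (m : ℕ) := by
        intro m
        rw [hT, hT']
        by_cases h1 : (m : ℕ) ≤ (r : ℕ) <;> by_cases h2 : (s : ℕ) ≤ (m : ℕ) <;>
          simp [h1, h2]
      have step2 : ∑ m : Fin n, T r m * T' m s
          = ∑ m ∈ range n, if (s : ℕ) ≤ m ∧ m ≤ (r : ℕ)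
              then c ((r : ℕ) - m) * w (n - 1 + (m - (s : ℕ))) else 0 := by
        rw [Finset.sum_congr rfl (fun m _ => step1 m)]
        exact Fin.sum_univ_eq_sum_range (fun m : ℕ => if (s : ℕ) ≤ m ∧ m ≤ (r : ℕ)
          then c ((r : ℕ) - m) * w (n - 1 + (m - (s : ℕ))) else 0) n
      rw [step2, ← Finset.sum_filter]
      have hfil : (range n).filter (fun m => (s : ℕ) ≤ m ∧ m ≤ (r : ℕ))
          = Icc (s : ℕ) (r : ℕ) := by
        ext m
        simp only [mem_filter, mem_range, mem_Icc]
        have := r.isLt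
        omega
      rw [hfil]
      have reindex : ∑ m ∈ Icc (s : ℕ) (r : ℕ), c ((r : ℕ) - m) * w (n - 1 + (m - (s : ℕ)))
          = ∑ k ∈ range ((r : ℕ) - (s : ℕ) + 1), c k * w (n - 1 + ((r : ℕ) - (s : ℕ) - k)) := by
        refine Finset.sum_nbij' (i := fun m => (r : ℕ) - m) (j := fun k => (r : ℕ) - k)
          ?_ ?_ ?_ ?_ ?_
        · intro m hm; rw [mem_Icc] at hm; rw [mem_range]; omega
        · intro k hk; rw [mem_range] at hk; rw [mem_Icc]; omega
        · intro m hm; rw [mem_Icc] at hm; omega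
        · intro k hk; rw [mem_range] at hk; omega
        · intro m hm
          rw [mem_Icc] at hm
          have e1 : (r : ℕ) - ((r : ℕ) - m) = m := by omega
          have e2 : (r : ℕ) - m = ((r : ℕ) - (s : ℕ)) - (m - (s : ℕ)) := by omega
          have e3 : ((r : ℕ) - (s : ℕ)) - (((r : ℕ) - (s : ℕ)) - (m - (s : ℕ))) = m - (s : ℕ) := by
            omega
          rw [e2, e3]
      rw [reindex, L ((r : ℕ) - (s : ℕ)) hdlt]
      have hiff : (r = s) ↔ ((r : ℕ) - (s : ℕ) = 0) := by
        constructor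
        · intro h; subst h; omega
        · intro h; exact Fin.ext (by omega)
      by_cases h : r = s
      · simp [h, hiff.mp h]
      · have hne : (r : ℕ) ≠ (s : ℕ) := fun hh => h (Fin.ext hh)
        simp [h]
        omega
    · have hz : ∀ m : Fin n, T r m * T' m s = 0 := by
        intro m
        by_cases h1 : (m : ℕ) ≤ (r : ℕ)
        · rw [hT', if_neg (by omega), mul_zero]
        · rw [hT, if_neg (by omega), zero_mul]
      rw [Finset.sum_congr rfl (fun m _ => hz m), Finset.sum_const, smul_zero,
        if_neg (by intro h; subst h; omega)]
  exact ⟨hmul, mul_eq_one_comm.mp hmul⟩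
end

section
/- Let α_1,…,α_n be distinct elements of F_q^* and let G(x)=∏_{i=1}^n (x−α_i)=x^n+c_1x^{n−1}+⋯+c_{n−1}x+c_n. Set u_j=1/G'(α_j) and, for integers t (possibly negative), w_t=∑_{j=1}^n u_j α_j^t. Then the n×n lower-triangular Toeplitz matrix with (r,s) entry c_{n−(r−s)} for r≥s and 0 for r<s (rows and columns indexed 0,…,n−1, so the diagonal entries are c_n) is invertible, and its inverse is −1 times the lower-triangular Toeplitz matrix with (r,s) entry w_{−1−(r−s)} for r≥s and 0 for r<s. -/
open Polynomial Finset Matrix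


lemma keyL {F : Type*} [Field F] {n : ℕ} (α : Fin n → F) (hα : Function.Injective α)
    (e : ℕ) (he : e < n) :
    ∑ j : Fin n, ((Polynomial.derivative (∏ i : Fin n, (X - C (α i)))).eval (α j))⁻¹ * α j ^ e
      = if e = n - 1 then 1 else 0 := by
  classical
  have hinj : Set.InjOn α ↑(univ : Finset (Fin n)) := hα.injOn
  have hcard : (univ : Finset (Fin n)).card = n := by simp
  have hXe : (X ^ e : F[X]) = Lagrange.interpolate univ α (fun i => α i ^ e) := by
    have hdeg : (X ^ e : F[X]).degree < ((univ : Finset (Fin n)).card : ℕ) := by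
      rw [degree_X_pow, hcard]
      exact_mod_cast he
    have := Lagrange.eq_interpolate (f := (X ^ e : F[X])) hinj hdeg
    simpa using this
  have hbasis : ∀ i : Fin n, (Lagrange.basis univ α i).coeff (n - 1)
      = Lagrange.nodalWeight univ α i := by
    intro i
    have hb : Lagrange.basis univ α i
        = C (Lagrange.nodalWeight univ α i) * Lagrange.nodal (univ.erase i) α := by
      simp_rw [Lagrange.basis, Lagrange.basisDivisor, Lagrange.nodal, Lagrange.nodalWeight,
        prod_mul_distrib, map_prod]
    rw [hb, coeff_C_mul]
    have hmono : (Lagrange.nodal (univ.erase i) α).Monic := Lagrange.nodal_monic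
    have hdeg : (Lagrange.nodal (univ.erase i) α).natDegree = n - 1 := by
      rw [Lagrange.natDegree_nodal, card_erase_of_mem (mem_univ i), hcard]
    rw [← hdeg, hmono.coeff_natDegree, mul_one]
  have hcoeff := congrArg (fun p : F[X] => p.coeff (n - 1)) hXe
  simp only [Lagrange.interpolate_apply, finset_sum_coeff, coeff_C_mul, coeff_X_pow] at hcoeff
  have hG : (∏ i : Fin n, (X - C (α i))) = Lagrange.nodal univ α := (Lagrange.nodal_eq _ _).symm
  calc ∑ j : Fin n, ((Polynomial.derivative (∏ i : Fin n, (X - C (α i)))).eval (α j))⁻¹ * α j ^ e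
      = ∑ j : Fin n, α j ^ e * (Lagrange.basis univ α j).coeff (n - 1) := by
        refine Finset.sum_congr rfl fun j _ => ?_
        rw [hbasis j, hG, Lagrange.nodalWeight_eq_eval_derivative_nodal (mem_univ j), mul_comm]
    _ = if e = n - 1 then 1 else 0 := by
        rw [← hcoeff]
        simp [eq_comm]


set_option maxHeartbeats 1000000 in
/-- For distinct nonzero `α_1, …, α_n`, the lower-triangular Toeplitz matrix with entries
`c_{n-(r-s)}` (descending coefficients of `G = ∏ (X - C (α i))`, diagonal `c_n`) is invertible,
with inverse `-1` times the lower-triangular Toeplitz matrix with entries `w_{-1-(r-s)}`,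
where `w_t = ∑ u_j α_j^t` for integers `t` and `u_j = 1/G'(α_j)`. -/
theorem stmt_10 {F : Type*} [Field F] [Fintype F] {n : ℕ}
    (α : Fin n → F) (hα : Function.Injective α) (hα0 : ∀ i, α i ≠ 0)
    (G : F[X]) (hG : G = ∏ i : Fin n, (X - C (α i)))
    (c : ℕ → F) (hc : ∀ j ≤ n, c j = G.coeff (n - j))
    (u : Fin n → F) (hu : ∀ j, u j = ((Polynomial.derivative G).eval (α j))⁻¹)
    (w : ℤ → F) (hw : ∀ t : ℤ, w t = ∑ j : Fin n, u j * α j ^ t)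
    (T T' : Matrix (Fin n) (Fin n) F)
    (hT : ∀ r s : Fin n, T r s =
      if (s : ℕ) ≤ (r : ℕ) then c (n - ((r : ℕ) - (s : ℕ))) else 0)
    (hT' : ∀ r s : Fin n, T' r s =
      if (s : ℕ) ≤ (r : ℕ) then -w (-1 - (((r : ℕ) - (s : ℕ) : ℕ) : ℤ)) else 0) :
    T * T' = 1 ∧ T' * T = 1 := by
  classical
  have hGm : G.Monic := by
    rw [hG]; exact monic_prod_of_monic _ _ (fun i _ => monic_X_sub_C _)
  have hGdeg : G.natDegree = n := by
    rw [hG, natDegree_prod_of_monic _ _ (fun i _ => monic_X_sub_C _)]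
    simp
  have hGeval : ∀ j, G.eval (α j) = 0 := fun j => by
    rw [hG, eval_prod]
    exact Finset.prod_eq_zero (mem_univ j) (by simp)
  have key : ∀ e : ℕ, e < n → ∑ j : Fin n, u j * α j ^ e = if e = n - 1 then 1 else 0 := by
    intro e he
    rw [show (∑ j : Fin n, u j * α j ^ e)
        = ∑ j : Fin n, ((Polynomial.derivative (∏ i : Fin n, (X - C (α i)))).eval (α j))⁻¹ * α j ^ e
      from Finset.sum_congr rfl fun j _ => by rw [hu j, hG]]
    exact keyL α hα e he
  have main : T * T' = 1 := by
    ext r s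
    rw [Matrix.mul_apply]
    by_cases hsr : (s : ℕ) ≤ (r : ℕ)
    · -- s ≤ r case
      set m : ℕ := (r : ℕ) - (s : ℕ) with hm
      have hmn : m < n := by have := r.isLt; omega
      -- Step 1: reindex to range (m+1)
      have step1 : (∑ k : Fin n, T r k * T' k s)
          = ∑ d ∈ Finset.range (m + 1), G.coeff (m - d) * (-w (-1 - (d : ℤ))) := by
        rw [← Finset.sum_filter_add_sum_filter_not Finset.univ
          (fun k : Fin n => (s : ℕ) ≤ (k : ℕ) ∧ (k : ℕ) ≤ (r : ℕ))]
        have h2 : (∑ k ∈ Finset.univ.filter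
            (fun k : Fin n => ¬((s : ℕ) ≤ (k : ℕ) ∧ (k : ℕ) ≤ (r : ℕ))), T r k * T' k s) = 0 := by
          refine Finset.sum_eq_zero fun k hk => ?_
          rw [Finset.mem_filter] at hk
          by_cases h1 : (k : ℕ) ≤ (r : ℕ)
          · rw [hT', if_neg (fun h2 => hk.2 ⟨h2, h1⟩), mul_zero]
          · rw [hT, if_neg h1, zero_mul]
        rw [h2, add_zero]
        refine Finset.sum_bij' (fun k _ => (k : ℕ) - (s : ℕ))
          (fun d hd => (⟨(s : ℕ) + d, by
            rw [Finset.mem_range] at hd; have := r.isLt; omega⟩ : Fin n)) ?_ ?_ ?_ ?_ ?_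
        · intro k hk
          rw [Finset.mem_filter] at hk
          show ((k : ℕ) - (s : ℕ)) ∈ Finset.range (m + 1)
          rw [Finset.mem_range]
          omega
        · intro d hd
          rw [Finset.mem_range] at hd
          rw [Finset.mem_filter]
          refine ⟨mem_univ _, ?_, ?_⟩
          · show (s : ℕ) ≤ (s : ℕ) + d
            omega
          · show (s : ℕ) + d ≤ (r : ℕ)
            omega
        · intro k hk
          rw [Finset.mem_filter] at hk
          apply Fin.ext
          show (s : ℕ) + ((k : ℕ) - (s : ℕ)) = (k : ℕ)
          omega
        · intro d hd
          rw [Finset.mem_range] at hd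
          show (s : ℕ) + d - (s : ℕ) = d
          omega
        · intro k hk
          rw [Finset.mem_filter] at hk
          obtain ⟨-, hk1, hk2⟩ := hk
          rw [hT, hT', if_pos hk2, if_pos hk1,
            hc (n - ((r : ℕ) - (k : ℕ))) (by omega)]
          have h3 : n - (n - ((r : ℕ) - (k : ℕ))) = (r : ℕ) - (k : ℕ) := by
            have := r.isLt; omega
          rw [h3]
          have h4 : (r : ℕ) - (k : ℕ) = m - ((k : ℕ) - (s : ℕ)) := by omega
          rw [h4]
      -- Step 2: reflect and expand
      have step2 : (∑ d ∈ Finset.range (m + 1), G.coeff (m - d) * (-w (-1 - (d : ℤ))))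
          = -∑ d ∈ Finset.range (m + 1), G.coeff d * w (-1 - ((m - d : ℕ) : ℤ)) := by
        rw [← Finset.sum_neg_distrib,
          ← Finset.sum_range_reflect (fun d => -(G.coeff d * w (-1 - ((m - d : ℕ) : ℤ)))) (m + 1)]
        refine Finset.sum_congr rfl fun d hd => ?_
        rw [Finset.mem_range] at hd
        have h1 : m + 1 - 1 - d = m - d := by omega
        have h2 : m - (m + 1 - 1 - d) = d := by omega
        rw [h1]
        rw [show m - (m - d) = d by omega]
        exact mul_neg _ _
      -- Step 3: expand w, pull out zpow
      have step3 : (∑ d ∈ Finset.range (m + 1), G.coeff d * w (-1 - ((m - d : ℕ) : ℤ)))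
          = ∑ j : Fin n, u j * α j ^ (-1 - (m : ℤ)) *
              ∑ d ∈ Finset.range (m + 1), G.coeff d * α j ^ d := by
        simp_rw [hw, Finset.mul_sum]
        rw [Finset.sum_comm]
        refine Finset.sum_congr rfl fun j _ => Finset.sum_congr rfl fun d hd => ?_
        rw [Finset.mem_range] at hd
        have h1 : (-1 - ((m - d : ℕ) : ℤ)) = (d : ℤ) + (-1 - (m : ℤ)) := by
          push_cast [Nat.cast_sub (by omega : d ≤ m)]
          omega
        rw [h1, zpow_add₀ (hα0 j), zpow_natCast]
        ring
      -- Step 4: tail sum via G(α j) = 0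
      have htail : ∀ j : Fin n, (∑ d ∈ Finset.range (m + 1), G.coeff d * α j ^ d)
          = -∑ d ∈ Finset.Ico (m + 1) (n + 1), G.coeff d * α j ^ d := by
        intro j
        have h0 : (∑ d ∈ Finset.range (n + 1), G.coeff d * α j ^ d) = 0 := by
          rw [← hGdeg, ← Polynomial.eval_eq_sum_range, hGeval]
        have h1 : (∑ d ∈ Finset.range (m + 1), G.coeff d * α j ^ d)
            + (∑ d ∈ Finset.Ico (m + 1) (n + 1), G.coeff d * α j ^ d) = 0 := by
          rw [Finset.sum_range_add_sum_Ico _ (by omega : m + 1 ≤ n + 1)]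
          exact h0
        exact eq_neg_of_add_eq_zero_left h1
      -- Step 5: combine
      have step5 : (∑ j : Fin n, u j * α j ^ (-1 - (m : ℤ)) *
              ∑ d ∈ Finset.range (m + 1), G.coeff d * α j ^ d)
          = -∑ d ∈ Finset.Ico (m + 1) (n + 1), G.coeff d *
              ∑ j : Fin n, u j * α j ^ (d - 1 - m) := by
        calc (∑ j : Fin n, u j * α j ^ (-1 - (m : ℤ)) *
                ∑ d ∈ Finset.range (m + 1), G.coeff d * α j ^ d)
            = ∑ j : Fin n, ∑ d ∈ Finset.Ico (m + 1) (n + 1),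
                -(G.coeff d * (u j * α j ^ (d - 1 - m))) := by
              refine Finset.sum_congr rfl fun j _ => ?_
              rw [htail j, mul_neg, Finset.mul_sum, ← Finset.sum_neg_distrib]
              refine Finset.sum_congr rfl fun d hd => ?_
              rw [Finset.mem_Ico] at hd
              have h1 : ((d - 1 - m : ℕ) : ℤ) = (d : ℤ) + (-1 - (m : ℤ)) := by
                have : 1 + m ≤ d := by omega
                push_cast [Nat.cast_sub (by omega : m ≤ d - 1), Nat.cast_sub (by omega : 1 ≤ d)]
                omega
              rw [← zpow_natCast (α j) (d - 1 - m), h1, zpow_add₀ (hα0 j), zpow_natCast]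
              ring
          _ = ∑ d ∈ Finset.Ico (m + 1) (n + 1), ∑ j : Fin n,
                -(G.coeff d * (u j * α j ^ (d - 1 - m))) := Finset.sum_comm
          _ = -∑ d ∈ Finset.Ico (m + 1) (n + 1), G.coeff d *
                ∑ j : Fin n, u j * α j ^ (d - 1 - m) := by
              rw [← Finset.sum_neg_distrib]
              refine Finset.sum_congr rfl fun d _ => ?_
              rw [neg_mul_eq_mul_neg, ← Finset.sum_neg_distrib, Finset.mul_sum]
              exact Finset.sum_congr rfl fun j _ => by ring
      rw [step1, step2, step3, step5, neg_neg]
      -- Step 6: evaluate using key lemma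
      have step6 : (∑ d ∈ Finset.Ico (m + 1) (n + 1), G.coeff d *
              ∑ j : Fin n, u j * α j ^ (d - 1 - m))
          = if m = 0 then 1 else 0 := by
        have hiter : ∀ d ∈ Finset.Ico (m + 1) (n + 1),
            G.coeff d * (∑ j : Fin n, u j * α j ^ (d - 1 - m))
              = if d = n + m then G.coeff d else 0 := by
          intro d hd
          rw [Finset.mem_Ico] at hd
          rw [key (d - 1 - m) (by omega)]
          by_cases h : d - 1 - m = n - 1
          · rw [if_pos h, if_pos (by omega), mul_one]
          · rw [if_neg h, if_neg (by omega), mul_zero]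
        rw [Finset.sum_congr rfl hiter, Finset.sum_ite_eq' _ (n + m) G.coeff]
        by_cases hm0 : m = 0
        · rw [if_pos (by rw [Finset.mem_Ico]; omega), if_pos hm0,
            show n + m = n by omega, ← hGdeg]
          exact hGm.coeff_natDegree
        · rw [if_neg (by rw [Finset.mem_Ico]; omega), if_neg hm0]
      rw [step6]
      by_cases hm0 : m = 0
      · have : r = s := Fin.ext (by omega)
        rw [this, Matrix.one_apply_eq, if_pos hm0]
      · have : r ≠ s := fun h => hm0 (by rw [h] at hm; omega)
        rw [Matrix.one_apply_ne this, if_neg hm0]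
    · -- s > r case
      have hzero : ∀ k ∈ (univ : Finset (Fin n)), T r k * T' k s = 0 := by
        intro k _
        by_cases h1 : (k : ℕ) ≤ (r : ℕ)
        · rw [hT', if_neg (fun h2 => hsr (le_trans h2 h1)), mul_zero]
        · rw [hT, if_neg h1, zero_mul]
      rw [Finset.sum_eq_zero hzero,
        Matrix.one_apply_ne (fun h => hsr (le_of_eq (congrArg Fin.val h).symm))]
  exact ⟨main, mul_eq_one_comm.mp main⟩
end

section
/- Let 3 ≤ k < n ≤ q, let α_1,…,α_n be distinct elements of F_q, and let (η_{m,i}) (0≤m≤k−1, 1≤i≤n−k) be elements of F_q. Let I={i_1<⋯<i_k} be a k-subset of {1,…,n}, let G_I(x)=∏_{i∈I}(x−α_i)=∑_{j=0}^k c_j x^{k−j} with c_0=1, set d_j=c_{k−j}, u_i=1/G_I'(α_i) for i∈I, and w_t=∑_{i∈I} u_i α_i^t. For 0≤m≤k−1 and 1≤t≤k set a_{m,t}^l=∑_{i+j=l, 1≤i≤n−k, 0≤j≤t−1} η_{m,i} d_j and g_{m,t} = −∑_{l=t}^{n−k+t−1} a_{m,t}^l w_{k−1−t+l}. Then the determinant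 of the k×k matrix whose (m, a) entry is α_{i_a}^m + ∑_{i=1}^{n−k} η_{m,i} α_{i_a}^{k−1+i} (0≤m≤k−1, 1≤a≤k) equals M(I)·∏_{1≤a<b≤k}(α_{i_b}−α_{i_a}), where M(I) is the determinant of the k×k matrix whose (m,t) entry is δ_{m+1,t} + g_{m,t}. -/
open Polynomial Finset Matrix

/-- The `k × k` minor, on the columns indexed by a `k`-subset `I = {i_1 < ⋯ < i_k}`, of
the generator matrix of the A-TGRS code determined by `α` and the twist parameters
`η_{m,i}` equals `M(I) · ∏_{a<b} (α_{i_b} - α_{i_a})`, where `M(I)` is the determinant of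
the matrix with entries `δ_{m+1,t} + g_{m,t}`. -/
theorem stmt_13 {F : Type*} [Field F] [Fintype F] {q k n : ℕ}
    (hq : Fintype.card F = q) (hk : 3 ≤ k) (hkn : k < n) (hnq : n ≤ q)
    (α : Fin n → F) (hα : Function.Injective α)
    (η : ℕ → ℕ → F)
    (I : Finset (Fin n)) (hI : I.card = k)
    (GI : F[X]) (hGI : GI = ∏ i ∈ I, (X - C (α i)))
    (c : ℕ → F) (hc : ∀ j ≤ k, c j = GI.coeff (k - j))
    (d : ℕ → F) (hd : ∀ j ≤ k, d j = c (k - j))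
    (u : Fin n → F) (hu : ∀ i ∈ I, u i = ((Polynomial.derivative GI).eval (α i))⁻¹)
    (w : ℕ → F) (hw : ∀ t, w t = ∑ i ∈ I, u i * α i ^ t)
    (a : ℕ → ℕ → ℕ → F)
    (ha : ∀ m t l, a m t l =
      ∑ p ∈ (Finset.Icc 1 (n - k) ×ˢ Finset.range t).filter (fun p => p.1 + p.2 = l),
        η m p.1 * d p.2)
    (g : ℕ → ℕ → F)
    (hg : ∀ m t, g m t = -∑ l ∈ Finset.range (n - k), a m t (t + l) * w (k - 1 + l))
    (e : Fin k → Fin n) (he : ∀ b, e b = (I.orderIsoOfFin hI b : Fin n)) :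
    (Matrix.of fun (m b : Fin k) =>
        α (e b) ^ (m : ℕ) +
          ∑ i ∈ Finset.Icc 1 (n - k), η (m : ℕ) i * α (e b) ^ (k - 1 + i)).det
      = (Matrix.of fun (m t : Fin k) =>
            (if (t : ℕ) + 1 = (m : ℕ) + 1 then 1 else 0) + g (m : ℕ) ((t : ℕ) + 1)).det *
          ∏ r : Fin k, ∏ s ∈ Finset.Ioi r, (α (e s) - α (e r)) := by
  classical
  -- basic facts
  have hGn : GI = Lagrange.nodal I α := by rw [hGI, Lagrange.nodal]
  have hdeg : GI.natDegree = k := by rw [hGn, Lagrange.natDegree_nodal, hI]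
  have hInj : Set.InjOn α I := fun x _ y _ h => hα h
  have hroot : ∀ b ∈ I, GI.eval (α b) = 0 := by
    intro b hb; rw [hGn]; exact Lagrange.eval_nodal_at_node hb
  have heb : ∀ b : Fin k, e b ∈ I := by
    intro b; rw [he b]; exact (I.orderIsoOfFin hI b).2
  have hDer : ∀ b ∈ I, (derivative GI).eval (α b) = ∏ i ∈ I.erase b, (α b - α i) := by
    intro b hb
    rw [hGn, Lagrange.eval_nodal_derivative_eval_node_eq hb, Lagrange.eval_nodal]
  have hD0 : ∀ b ∈ I, (derivative GI).eval (α b) ≠ 0 := by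
    intro b hb
    rw [hDer b hb]
    refine Finset.prod_ne_zero_iff.2 fun i hi => ?_
    have : i ≠ b := Finset.ne_of_mem_erase hi
    exact sub_ne_zero_of_ne fun hh => this (hα hh.symm)
  have hud : ∀ b ∈ I, u b * (derivative GI).eval (α b) = 1 := by
    intro b hb; rw [hu b hb]; exact inv_mul_cancel₀ (hD0 b hb)
  have hdj : ∀ j ≤ k, d j = GI.coeff j := by
    intro j hj
    rw [hd j hj, hc (k - j) (Nat.sub_le _ _), Nat.sub_sub_self hj]
  have hevalsum : ∀ x : F, GI.eval x = ∑ j ∈ range (k + 1), d j * x ^ j := by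
    intro x
    rw [eval_eq_sum_range, hdeg]
    exact Finset.sum_congr rfl fun j hj => by
      rw [hdj j (by simpa [Nat.lt_succ_iff] using hj)]
  -- L1 : w s = 0 for s + 1 < k
  have hw0 : ∀ s, s + 1 < k → w s = 0 := by
    intro s hs
    set P : F[X] := ∑ x ∈ I, C (u x * α x ^ s) * Lagrange.nodal (I.erase x) α with hP
    have hne : ∀ x ∈ I, ∀ b ∈ I, b ≠ x →
        eval (α b) (Lagrange.nodal (I.erase x) α) = 0 := by
      intro x hx b hb hbx
      rw [Lagrange.eval_nodal]
      exact Finset.prod_eq_zero (Finset.mem_erase.2 ⟨hbx, hb⟩) (sub_self _)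
    have hPeval : ∀ b ∈ I, P.eval (α b) = α b ^ s := by
      intro b hb
      rw [hP, eval_finset_sum]
      rw [Finset.sum_eq_single b (fun x hx hxb => by
        rw [eval_mul, hne x hx b hb (Ne.symm hxb), mul_zero]) (fun h => absurd hb h)]
      rw [eval_mul, eval_C, ← Lagrange.eval_nodal_derivative_eval_node_eq hb, ← hGn]
      rw [mul_assoc, mul_comm (α b ^ s), ← mul_assoc, hud b hb, one_mul]
    have hPdeg : P.degree < (I.card : ℕ) := by
      refine lt_of_le_of_lt (degree_sum_le _ _) ?_
      rw [Finset.sup_lt_iff (by rw [hI]; exact WithBot.bot_lt_coe k)]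
      intro x hx
      refine lt_of_le_of_lt (degree_mul_le _ _) ?_
      refine lt_of_le_of_lt (add_le_add degree_C_le le_rfl) ?_
      rw [zero_add, Lagrange.degree_nodal, Finset.card_erase_of_mem hx, hI]
      exact_mod_cast Nat.sub_lt (by omega) one_pos
    have hXdeg : (X ^ s : F[X]).degree < (I.card : ℕ) := by
      rw [degree_X_pow, hI]; exact_mod_cast (by omega : s < k)
    have hPX : P = X ^ s := by
      refine Polynomial.eq_of_degrees_lt_of_eval_index_eq I hInj hPdeg hXdeg ?_
      intro b hb; rw [hPeval b hb, eval_pow, eval_X]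
    have := congrArg (fun p : F[X] => p.coeff (k - 1)) hPX
    simp only [hP, finset_sum_coeff, coeff_C_mul, coeff_X_pow] at this
    rw [if_neg (by omega)] at this
    have hcoe : ∀ x ∈ I, (Lagrange.nodal (I.erase x) α).coeff (k - 1) = 1 := by
      intro x hx
      have hmon : (Lagrange.nodal (I.erase x) α).Monic := Lagrange.nodal_monic
      have : (Lagrange.nodal (I.erase x) α).natDegree = k - 1 := by
        rw [Lagrange.natDegree_nodal, Finset.card_erase_of_mem hx, hI]
      rw [← this]; exact hmon.coeff_natDegree
    rw [hw]
    rw [← this]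
    exact (Finset.sum_congr rfl fun x hx => by rw [hcoe x hx, mul_one]).symm
  -- L3
  have hw3 : ∀ s : ℕ, ∑ j ∈ range (k + 1), d j * w (s + j) = 0 := by
    intro s
    have : ∀ j ∈ range (k+1), d j * w (s + j)
        = ∑ x ∈ I, u x * α x ^ s * (d j * α x ^ j) := by
      intro j _
      rw [hw, Finset.mul_sum]
      exact Finset.sum_congr rfl fun x _ => by rw [pow_add]; ring
    rw [Finset.sum_congr rfl this, Finset.sum_comm]
    refine Finset.sum_eq_zero fun x hx => ?_
    rw [← Finset.mul_sum, ← hevalsum, hroot x hx, mul_zero]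
  -- the quotient-sum S
  set S : F → F → F := fun γ β =>
    ∑ j ∈ range (k + 1), d j * ∑ t ∈ range j, γ ^ (j - 1 - t) * β ^ t with hS
  have hS1 : ∀ γ β : F, S γ β * (β - γ) = GI.eval β - GI.eval γ := by
    intro γ β
    rw [hS]
    simp only []
    rw [Finset.sum_mul]
    have : ∀ j ∈ range (k+1), (d j * ∑ t ∈ range j, γ ^ (j-1-t) * β ^ t) * (β - γ)
        = d j * β ^ j - d j * γ ^ j := by
      intro j _
      have hg2 := geom_sum₂_mul β γ j
      have : ∑ t ∈ range j, γ ^ (j-1-t) * β ^ t = ∑ t ∈ range j, β ^ t * γ ^ (j-1-t) :=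
        Finset.sum_congr rfl fun t _ => mul_comm _ _
      rw [this, mul_assoc, hg2, mul_sub]
    rw [Finset.sum_congr rfl this, Finset.sum_sub_distrib, hevalsum β, hevalsum γ]
  have hder : ∀ γ : F, (derivative GI).eval γ
      = ∑ j ∈ range (k + 1), d j * (j * γ ^ (j - 1)) := by
    intro γ
    conv_lhs => rw [GI.as_sum_range' (k+1) (by omega)]
    rw [derivative_sum, eval_finset_sum]
    refine Finset.sum_congr rfl fun j hj => ?_
    rw [derivative_monomial, eval_monomial, hdj j (by simpa [Nat.lt_succ_iff] using hj)]
    ring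
  have hSdiag : ∀ γ : F, S γ γ = (derivative GI).eval γ := by
    intro γ
    rw [hder, hS]
    simp only []
    refine Finset.sum_congr rfl fun j _ => ?_
    congr 1
    have : ∀ t ∈ range j, γ ^ (j-1-t) * γ ^ t = γ ^ (j-1) := by
      intro t ht
      rw [← pow_add]
      congr 1
      have := Finset.mem_range.1 ht
      omega
    rw [Finset.sum_congr rfl this, Finset.sum_const, Finset.card_range, nsmul_eq_mul]
  have hkey : ∀ (b : Fin k), ∀ x ∈ I,
      u x * S (α x) (α (e b)) = if x = e b then 1 else 0 := by
    intro b x hx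
    have hz : S (α x) (α (e b)) * (α (e b) - α x) = 0 := by
      rw [hS1, hroot x hx, hroot (e b) (heb b), sub_zero]
    by_cases hxb : x = e b
    · subst hxb
      rw [if_pos rfl, hSdiag]
      exact hud _ hx
    · rw [if_neg hxb]
      have hne : α (e b) - α x ≠ 0 :=
        sub_ne_zero_of_ne fun hh => hxb (hα hh.symm)
      rcases mul_eq_zero.1 hz with h | h
      · rw [h, mul_zero]
      · exact absurd h hne
  have hnk1 : 1 ≤ n - k := by omega
  -- expansion of g
  have hgexp : ∀ (m t : ℕ), t < k → g m (t+1)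
      = ∑ i ∈ Icc 1 (n-k), η m i *
          ∑ j ∈ Ico (t+1) (k+1), d j * w (k + i - (t+2) + j) := by
    intro m t ht
    rw [hg]
    have step1 : ∀ l ∈ range (n-k), a m (t+1) (t+1+l) * w (k-1+l)
        = ∑ p ∈ Icc 1 (n-k) ×ˢ range (t+1),
            (if p.1 + p.2 = t+1+l then η m p.1 * d p.2 * w (k-1+l) else 0) := by
      intro l _
      rw [ha, Finset.sum_mul, Finset.sum_filter]
    rw [Finset.sum_congr rfl step1, Finset.sum_comm]
    have step2 : ∀ p ∈ Icc 1 (n-k) ×ˢ range (t+1),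
        (∑ l ∈ range (n-k), if p.1 + p.2 = t+1+l then η m p.1 * d p.2 * w (k-1+l) else 0)
        = η m p.1 * d p.2 * w (k + p.1 - (t+2) + p.2) := by
      rintro ⟨i, j⟩ hp
      rw [Finset.mem_product, Finset.mem_Icc, Finset.mem_range] at hp
      obtain ⟨⟨hi1, hi2⟩, hj⟩ := hp
      by_cases hc1 : t + 1 ≤ i + j
      · rw [Finset.sum_eq_single (i + j - (t+1))]
        · rw [if_pos (by omega)]
          congr 2
          omega
        · intro l _ hl
          exact if_neg (by omega)
        · intro hno
          exact absurd (Finset.mem_range.2 (by omega)) hno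
      · rw [Finset.sum_eq_zero (fun l _ => if_neg (by omega))]
        rw [hw0 (k + i - (t+2) + j) (by omega), mul_zero]
    rw [Finset.sum_congr rfl step2, Finset.sum_product]
    have step3 : ∀ i ∈ Icc 1 (n-k),
        ∑ j ∈ range (t+1), η m i * d j * w (k + i - (t+2) + j)
        = -(η m i * ∑ j ∈ Ico (t+1) (k+1), d j * w (k + i - (t+2) + j)) := by
      intro i _
      have hsplit : (∑ j ∈ range (t+1), d j * w (k + i - (t+2) + j))
          + ∑ j ∈ Ico (t+1) (k+1), d j * w (k + i - (t+2) + j) = 0 := by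
        rw [Finset.range_eq_Ico, Finset.sum_Ico_consecutive _ (by omega) (by omega),
          ← Finset.range_eq_Ico]
        exact hw3 _
      have : ∑ j ∈ range (t+1), η m i * d j * w (k + i - (t+2) + j)
          = η m i * ∑ j ∈ range (t+1), d j * w (k + i - (t+2) + j) := by
        rw [Finset.mul_sum]
        exact Finset.sum_congr rfl fun j _ => by ring
      rw [this, eq_neg_of_add_eq_zero_right hsplit, mul_neg, neg_neg]
    rw [Finset.sum_congr rfl step3, Finset.sum_neg_distrib, neg_neg]
  -- exchange of summation order
  have exch : ∀ f : ℕ → ℕ → F,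
      ∑ t ∈ range k, ∑ j ∈ Ico (t+1) (k+1), f t j
        = ∑ j ∈ range (k+1), ∑ t ∈ range j, f t j := by
    intro f
    rw [Finset.sum_sigma', Finset.sum_sigma']
    refine Finset.sum_nbij' (fun p => ⟨p.2, p.1⟩) (fun p => ⟨p.2, p.1⟩)
      ?_ ?_ (fun p _ => rfl) (fun p _ => rfl) (fun p _ => rfl) <;>
      rintro ⟨x, y⟩ h <;>
      simp only [Finset.mem_sigma, Finset.mem_range, Finset.mem_Ico] at h ⊢ <;> omega
  -- the main Lagrange-interpolation identity
  have hmain : ∀ (i : ℕ), 1 ≤ i → ∀ b : Fin k,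
      ∑ j ∈ range (k+1), ∑ t ∈ range j, d j * (w (k+i-(t+2)+j) * α (e b) ^ t)
        = α (e b) ^ (k-1+i) := by
    intro i hi b
    have h1 : ∀ j ∈ range (k+1), ∀ t ∈ range j,
        d j * (w (k+i-(t+2)+j) * α (e b) ^ t)
          = ∑ x ∈ I, u x * α x ^ (k-1+i) * (d j * (α x ^ (j-1-t) * α (e b) ^ t)) := by
      intro j hj t htj
      have hexp : k+i-(t+2)+j = (k-1+i) + (j-1-t) := by
        have h1 := Finset.mem_range.1 hj; have h2 := Finset.mem_range.1 htj; omega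
      rw [hexp, hw, Finset.sum_mul, Finset.mul_sum]
      refine Finset.sum_congr rfl fun x _ => ?_
      rw [pow_add]; ring
    rw [Finset.sum_congr rfl (fun j hj => Finset.sum_congr rfl (h1 j hj))]
    rw [Finset.sum_congr rfl (fun j _ => Finset.sum_comm), Finset.sum_comm]
    have h2 : ∀ x ∈ I, ∑ j ∈ range (k+1), ∑ t ∈ range j,
        u x * α x ^ (k-1+i) * (d j * (α x ^ (j-1-t) * α (e b) ^ t))
          = α x ^ (k-1+i) * (u x * S (α x) (α (e b))) := by
      intro x hx
      have : ∑ j ∈ range (k+1), ∑ t ∈ range j,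
          u x * α x ^ (k-1+i) * (d j * (α x ^ (j-1-t) * α (e b) ^ t))
          = u x * α x ^ (k-1+i)
            * ∑ j ∈ range (k+1), d j * ∑ t ∈ range j, α x ^ (j-1-t) * α (e b) ^ t := by
        simp only [Finset.mul_sum]
      rw [this, hS]; ring
    rw [Finset.sum_congr rfl h2,
      Finset.sum_congr rfl (fun x hx => by rw [hkey b x hx, mul_ite, mul_one, mul_zero]),
      Finset.sum_ite_eq' I (e b) (fun x => α x ^ (k-1+i)), if_pos (heb b)]
  -- the row identity for the twist part
  have hgsum : ∀ (m : ℕ) (b : Fin k),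
      ∑ t ∈ range k, g m (t+1) * α (e b) ^ t
        = ∑ i ∈ Icc 1 (n-k), η m i * α (e b) ^ (k-1+i) := by
    intro m b
    have c1 : ∑ t ∈ range k, g m (t+1) * α (e b) ^ t
        = ∑ t ∈ range k, ∑ i ∈ Icc 1 (n-k), η m i *
            ∑ j ∈ Ico (t+1) (k+1), d j * (w (k+i-(t+2)+j) * α (e b) ^ t) := by
      refine Finset.sum_congr rfl fun t ht => ?_
      rw [hgexp m t (Finset.mem_range.1 ht), Finset.sum_mul]
      refine Finset.sum_congr rfl fun i _ => ?_
      rw [mul_assoc, Finset.sum_mul]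
      congr 1
      exact Finset.sum_congr rfl fun j _ => by ring
    rw [c1, Finset.sum_comm]
    refine Finset.sum_congr rfl fun i hi => ?_
    rw [← Finset.mul_sum, exch (fun t j => d j * (w (k+i-(t+2)+j) * α (e b) ^ t)),
      hmain i (Finset.mem_Icc.1 hi).1 b]
  -- matrix decomposition
  have hMV : (Matrix.of fun (m b : Fin k) =>
        α (e b) ^ (m : ℕ) +
          ∑ i ∈ Finset.Icc 1 (n - k), η (m : ℕ) i * α (e b) ^ (k - 1 + i))
      = (Matrix.of fun (m t : Fin k) =>
            (if (t : ℕ) + 1 = (m : ℕ) + 1 then 1 else 0) + g (m : ℕ) ((t : ℕ) + 1))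
        * (Matrix.of fun (t b : Fin k) => α (e b) ^ (t : ℕ)) := by
    ext m b
    rw [Matrix.mul_apply]
    simp only [Matrix.of_apply]
    have hsplit : ∑ t : Fin k,
        ((if (t:ℕ)+1 = (m:ℕ)+1 then (1:F) else 0) + g (m:ℕ) ((t:ℕ)+1)) * α (e b) ^ (t:ℕ)
        = (∑ t : Fin k, (if (t:ℕ)+1=(m:ℕ)+1 then (1:F) else 0) * α (e b) ^ (t:ℕ))
          + ∑ t : Fin k, g (m:ℕ) ((t:ℕ)+1) * α (e b) ^ (t:ℕ) := by
      rw [← Finset.sum_add_distrib]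
      exact Finset.sum_congr rfl fun t _ => by ring
    rw [hsplit]
    congr 1
    · rw [Finset.sum_eq_single m (fun t _ htm =>
        by rw [if_neg (fun hh => htm (Fin.ext (by omega))), zero_mul])
        (fun h => absurd (Finset.mem_univ m) h)]
      rw [if_pos rfl, one_mul]
    · rw [Fin.sum_univ_eq_sum_range (fun t => g (m:ℕ) (t+1) * α (e b) ^ t)]
      exact (hgsum m b).symm
  rw [hMV, Matrix.det_mul]
  congr 1
  have hV : (Matrix.of fun (t b : Fin k) => α (e b) ^ (t : ℕ))
      = (Matrix.vandermonde (fun i => α (e i)))ᵀ := by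
    ext t b; simp [Matrix.vandermonde]
  rw [hV, Matrix.det_transpose, Matrix.det_vandermonde]
end

section
/- Let 3 ≤ k < n ≤ q, let α_1,…,α_n be distinct elements of F_q, and let (η_{m,i}) (0≤m≤k−1, 1≤i≤n−k) be elements of F_q. Let G be the k×n matrix over F_q whose (m,j) entry is α_j^m + ∑_{i=1}^{n−k} η_{m,i} α_j^{k−1+i}. For each k-subset I of {1,…,n}, define G_I(x)=∏_{i∈I}(x−α_i)=∑_{j=0}^k c_j x^{k−j} (c_0=1), d_j=c_{k−j}, u_i=1/G_I'(α_i), w_t=∑_{i∈I}u_i α_i^t, a_{m,t}^l=∑_{i+j=l,1≤i≤n−k,0≤j≤t−1}η_{m,i}d_j, g_{m,t}=−∑_{l=t}^{n−k+t−1}a_{m,t}^l w_{k−1−t+l}, and M(I)=det(δ_{m+1,t}+g_{m,t})_{0≤m≤k−1,1≤t≤k}. Then the following are equivalent: (a) for every nonzero vector f=(f_0,…,f_{k−1})∈F_q^k, the codeword f·G ∈ F_q^n has Hamming weight at least n−k+1; (b) M(I) ≠ 0 for every k-subset I of {1,…,n}. -/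
open Polynomial Finset Matrix

section aux
variable {F : Type*} [Field F] {n : ℕ} {α : Fin n → F} {I : Finset (Fin n)} {k : ℕ}

lemma prodP_monic : (∏ j ∈ I, (X - C (α j))).Monic :=
  monic_prod_of_monic _ _ fun j _ => monic_X_sub_C (α j)

lemma prodP_natDegree (hI : I.card = k) : (∏ j ∈ I, (X - C (α j))).natDegree = k := by
  rw [natDegree_prod_of_monic _ _ fun j _ => monic_X_sub_C (α j)]
  simp [hI]

lemma prodP_degree (hI : I.card = k) : (∏ j ∈ I, (X - C (α j))).degree = (k : WithBot ℕ) := by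
  rw [degree_eq_natDegree (prodP_monic (α := α)).ne_zero, prodP_natDegree hI]

lemma key_coeff (hα : Function.Injective α) (hI : I.card = k) {s : ℕ} (hs : s < k) (N : ℕ) :
    (X ^ N %ₘ ∏ j ∈ I, (X - C (α j))).coeff s
      = ∑ j ∈ Icc (s + 1) k, (∏ j ∈ I, (X - C (α j))).coeff j *
          ∑ i ∈ I, ((derivative (∏ j ∈ I, (X - C (α j)))).eval (α i))⁻¹ * α i ^ (N + (j - (s + 1))) := by
  set P : F[X] := ∏ j ∈ I, (X - C (α j)) with hPdef
  have hmon : P.Monic := prodP_monic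
  have hdeg : P.degree = (k : WithBot ℕ) := prodP_degree hI
  have hnd : P.natDegree = k := prodP_natDegree hI
  have hinj : Set.InjOn α I := hα.injOn
  set R := X ^ N %ₘ P with hR
  have hdegR : R.degree < (I.card : WithBot ℕ) := by
    rw [hI, ← hdeg]; exact degree_modByMonic_lt _ hmon
  have heval : ∀ i ∈ I, R.eval (α i) = α i ^ N := by
    intro i hi
    have h1 := modByMonic_add_div (X ^ N : F[X]) P
    have h2 : P.eval (α i) = 0 := by
      rw [hPdef, eval_prod]
      exact Finset.prod_eq_zero hi (by simp)
    have := congrArg (Polynomial.eval (α i)) h1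
    rw [hR]
    simpa [h2] using this
  have hnodal : Lagrange.nodal I α = P := rfl
  have hRint : R = ∑ i ∈ I, C (α i ^ N) * Lagrange.basis I α i := by
    conv_lhs => rw [Lagrange.eq_interpolate hinj hdegR, Lagrange.interpolate_apply]
    exact Finset.sum_congr rfl fun i hi => by rw [heval i hi]
  have hbasis : ∀ i ∈ I, ∀ s' : ℕ, (Lagrange.basis I α i).coeff s'
      = ((derivative P).eval (α i))⁻¹ *
        ∑ j ∈ Icc (s' + 1) k, α i ^ (j - (s' + 1)) * P.coeff j := by
    intro i hi s'
    rw [Lagrange.basis_eq_prod_sub_inv_mul_nodal_div hi, hnodal,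
      Lagrange.nodalWeight_eq_eval_derivative_nodal hi, hnodal,
      ← divByMonic_eq_div P (monic_X_sub_C (α i)), coeff_C_mul,
      coeff_divByMonic_X_sub_C, hnd]
  calc R.coeff s = ∑ i ∈ I, α i ^ N * ((derivative P).eval (α i))⁻¹ *
        ∑ j ∈ Icc (s + 1) k, α i ^ (j - (s + 1)) * P.coeff j := by
        rw [hRint, finset_sum_coeff]
        exact Finset.sum_congr rfl fun i hi => by
          rw [coeff_C_mul, hbasis i hi s, mul_assoc]
    _ = ∑ i ∈ I, ∑ j ∈ Icc (s + 1) k,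
          P.coeff j * (((derivative P).eval (α i))⁻¹ * α i ^ (N + (j - (s + 1)))) := by
        refine Finset.sum_congr rfl fun i hi => ?_
        rw [mul_assoc, Finset.mul_sum, Finset.mul_sum]
        refine Finset.sum_congr rfl fun j hj => ?_
        rw [pow_add]; ring
    _ = _ := by
        rw [Finset.sum_comm]
        exact Finset.sum_congr rfl fun j hj => by rw [← Finset.mul_sum]


/-- abbreviation for the `w` sums -/
noncomputable def wsum (α : Fin n → F) (I : Finset (Fin n)) (t : ℕ) : F :=
  ∑ i ∈ I, ((Polynomial.derivative (∏ j ∈ I, (X - C (α j)))).eval (α i))⁻¹ * α i ^ t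

lemma key_coeff' (hα : Function.Injective α) (hI : I.card = k) {s : ℕ} (hs : s < k) (N : ℕ) :
    (X ^ N %ₘ ∏ j ∈ I, (X - C (α j))).coeff s
      = ∑ j ∈ Icc (s + 1) k, (∏ j ∈ I, (X - C (α j))).coeff j * wsum α I (N + (j - (s + 1))) :=
  key_coeff hα hI hs N

lemma wsum_eq_zero (hα : Function.Injective α) (hI : I.card = k) (hk : 1 ≤ k)
    {t : ℕ} (ht : t < k - 1) : wsum α I t = 0 := by
  have hnd : (∏ j ∈ I, (X - C (α j))).natDegree = k := prodP_natDegree hI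
  have hck : (∏ j ∈ I, (X - C (α j))).coeff k = 1 := by
    rw [← hnd]; exact Monic.coeff_natDegree prodP_monic
  have h1 := key_coeff' hα hI (s := k - 1) (by omega) t
  have h2 : (X ^ t %ₘ ∏ j ∈ I, (X - C (α j))) = X ^ t := by
    rw [modByMonic_eq_self_iff prodP_monic, prodP_degree hI, degree_X_pow]
    exact_mod_cast (by omega : t < k)
  have h3 : k - 1 + 1 = k := by omega
  rw [h2, h3, Finset.Icc_self, Finset.sum_singleton, Nat.sub_self, Nat.add_zero,
    coeff_X_pow, if_neg (by omega), hck, one_mul] at h1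
  exact h1.symm

lemma sum_coeff_wsum (hI : I.card = k) (c : ℕ) :
    ∑ j ∈ range (k + 1), (∏ j ∈ I, (X - C (α j))).coeff j * wsum α I (c + j) = 0 := by
  unfold wsum
  simp_rw [Finset.mul_sum]
  rw [Finset.sum_comm]
  refine Finset.sum_eq_zero fun i hi => ?_
  have h2 : Polynomial.eval (α i) (∏ j ∈ I, (X - C (α j))) = 0 := by
    rw [eval_prod]; exact Finset.prod_eq_zero hi (by simp)
  have h3 := eval_eq_sum_range (p := ∏ j ∈ I, (X - C (α j))) (x := α i)
  rw [prodP_natDegree hI, h2] at h3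
  calc ∑ j ∈ range (k + 1), (∏ j ∈ I, (X - C (α j))).coeff j *
        (((Polynomial.derivative (∏ j ∈ I, (X - C (α j)))).eval (α i))⁻¹ * α i ^ (c + j))
      = (((Polynomial.derivative (∏ j ∈ I, (X - C (α j)))).eval (α i))⁻¹ * α i ^ c) *
          ∑ j ∈ range (k + 1), (∏ j ∈ I, (X - C (α j))).coeff j * α i ^ j := by
        rw [Finset.mul_sum]; exact Finset.sum_congr rfl fun j hj => by rw [pow_add]; ring
    _ = 0 := by rw [← h3]; ring


lemma highpow_coeff (hα : Function.Injective α) (hI : I.card = k) {s i : ℕ}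
    (hs : s < k) (hi : 1 ≤ i) :
    (X ^ (k - 1 + i) %ₘ ∏ j ∈ I, (X - C (α j))).coeff s
      = -∑ j ∈ range (s + 1),
          (∏ j ∈ I, (X - C (α j))).coeff j * wsum α I (k - 1 + i + j - (s + 1)) := by
  have h0 := sum_coeff_wsum (α := α) hI (k - 1 + i - (s + 1))
  rw [← Finset.sum_range_add_sum_Ico _ (by omega : s + 1 ≤ k + 1)] at h0
  rw [key_coeff' hα hI hs, ← Finset.Ico_add_one_right_eq_Icc]
  have e1 : ∑ j ∈ Finset.Ico (s + 1) (k + 1), (∏ j ∈ I, (X - C (α j))).coeff j *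
        wsum α I (k - 1 + i + (j - (s + 1)))
      = ∑ j ∈ Finset.Ico (s + 1) (k + 1), (∏ j ∈ I, (X - C (α j))).coeff j *
        wsum α I (k - 1 + i - (s + 1) + j) := by
    refine Finset.sum_congr rfl fun j hj => ?_
    have := (Finset.mem_Ico.mp hj).1
    congr 2
    omega
  have e2 : ∑ j ∈ range (s + 1), (∏ j ∈ I, (X - C (α j))).coeff j *
        wsum α I (k - 1 + i - (s + 1) + j)
      = ∑ j ∈ range (s + 1), (∏ j ∈ I, (X - C (α j))).coeff j *
        wsum α I (k - 1 + i + j - (s + 1)) := by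
    refine Finset.sum_congr rfl fun j hj => ?_
    congr 2
    omega
  rw [e1]
  rw [← e2] at *
  linear_combination h0


lemma entry_coeff (hα : Function.Injective α) (hI : I.card = k) {nk : ℕ}
    (η : ℕ → ℕ → F) (m : ℕ) (hm : m < k) {s : ℕ} (hs : s < k) :
    ((X ^ m + ∑ i ∈ Icc 1 nk, C (η m i) * X ^ (k - 1 + i)) %ₘ ∏ j ∈ I, (X - C (α j))).coeff s
      = (if s + 1 = m + 1 then 1 else 0) +
        -∑ l ∈ range nk,
          (∑ p ∈ (Icc 1 nk ×ˢ range (s + 1)).filter (fun p => p.1 + p.2 = (s + 1) + l),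
            η m p.1 * (∏ j ∈ I, (X - C (α j))).coeff p.2) * wsum α I (k - 1 + l) := by
  set P : F[X] := ∏ j ∈ I, (X - C (α j)) with hPdef
  set E : F := ∑ p ∈ Icc 1 nk ×ˢ range (s + 1),
      η m p.1 * P.coeff p.2 * wsum α I (k - 1 + p.1 + p.2 - (s + 1)) with hEdef
  have hXm : (X ^ m %ₘ P).coeff s = (if s + 1 = m + 1 then 1 else 0) := by
    rw [(modByMonic_eq_self_iff prodP_monic).mpr, coeff_X_pow]
    · rcases eq_or_ne s m with h | h <;> simp [h]
    · rw [prodP_degree hI, degree_X_pow]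
      exact_mod_cast hm
  have hsum : ((∑ i ∈ Icc 1 nk, C (η m i) * X ^ (k - 1 + i)) %ₘ P).coeff s = -E := by
    have hmap : (∑ i ∈ Icc 1 nk, C (η m i) * X ^ (k - 1 + i)) %ₘ P
        = ∑ i ∈ Icc 1 nk, C (η m i) * (X ^ (k - 1 + i) %ₘ P) := by
      have h1 : ∀ i : ℕ, (C (η m i) * X ^ (k - 1 + i)) %ₘ P
          = C (η m i) * (X ^ (k - 1 + i) %ₘ P) := by
        intro i
        have := smul_modByMonic (q := P) (η m i) (X ^ (k - 1 + i))
        simpa [smul_eq_C_mul] using this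
      calc (∑ i ∈ Icc 1 nk, C (η m i) * X ^ (k - 1 + i)) %ₘ P
          = (Polynomial.modByMonicHom P) (∑ i ∈ Icc 1 nk, C (η m i) * X ^ (k - 1 + i)) := rfl
        _ = ∑ i ∈ Icc 1 nk, (Polynomial.modByMonicHom P) (C (η m i) * X ^ (k - 1 + i)) :=
            map_sum _ _ _
        _ = _ := Finset.sum_congr rfl fun i _ => h1 i
    rw [hmap, finset_sum_coeff, hEdef, Finset.sum_product]
    calc ∑ b ∈ Icc 1 nk, (C (η m b) * (X ^ (k - 1 + b) %ₘ P)).coeff s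
        = ∑ b ∈ Icc 1 nk, -(∑ j ∈ range (s + 1),
            η m b * P.coeff j * wsum α I (k - 1 + b + j - (s + 1))) := by
          refine Finset.sum_congr rfl fun i hi => ?_
          have hi1 : 1 ≤ i := (Finset.mem_Icc.mp hi).1
          rw [coeff_C_mul, highpow_coeff hα hI hs hi1, mul_neg, Finset.mul_sum]
          congr 1
          exact Finset.sum_congr rfl fun j hj => by rw [← mul_assoc]
      _ = -∑ b ∈ Icc 1 nk, ∑ j ∈ range (s + 1),
            η m b * P.coeff j * wsum α I (k - 1 + b + j - (s + 1)) :=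
          Finset.sum_neg_distrib _
  have hR : ∑ l ∈ range nk,
      (∑ p ∈ (Icc 1 nk ×ˢ range (s + 1)).filter (fun p => p.1 + p.2 = (s + 1) + l),
        η m p.1 * P.coeff p.2) * wsum α I (k - 1 + l) = E := by
    calc ∑ l ∈ range nk,
        (∑ p ∈ (Icc 1 nk ×ˢ range (s + 1)).filter (fun p => p.1 + p.2 = (s + 1) + l),
          η m p.1 * P.coeff p.2) * wsum α I (k - 1 + l)
        = ∑ l ∈ range nk, ∑ p ∈ Icc 1 nk ×ˢ range (s + 1),
            if p.1 + p.2 = (s + 1) + l then η m p.1 * P.coeff p.2 * wsum α I (k - 1 + l)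
            else 0 := by
          refine Finset.sum_congr rfl fun l _ => ?_
          rw [Finset.sum_mul, Finset.sum_filter]
      _ = ∑ p ∈ Icc 1 nk ×ˢ range (s + 1), ∑ l ∈ range nk,
            if p.1 + p.2 = (s + 1) + l then η m p.1 * P.coeff p.2 * wsum α I (k - 1 + l)
            else 0 := Finset.sum_comm
      _ = E := by
          rw [hEdef]
          refine Finset.sum_congr rfl fun p hp => ?_
          obtain ⟨hp1, hp2⟩ := Finset.mem_product.mp hp
          rw [Finset.mem_Icc] at hp1
          rw [Finset.mem_range] at hp2
          by_cases hc : s + 1 ≤ p.1 + p.2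
          · rw [Finset.sum_eq_single (p.1 + p.2 - (s + 1))]
            · rw [if_pos (by omega)]
              congr 2
              omega
            · intro l hl hne
              exact if_neg (by omega)
            · intro habs
              exact absurd (Finset.mem_range.mpr (by omega)) habs
          · rw [Finset.sum_eq_zero fun l hl => if_neg (by omega)]
            rw [wsum_eq_zero hα hI (by omega) (by omega : k - 1 + p.1 + p.2 - (s + 1) < k - 1),
              mul_zero]
    
  rw [add_modByMonic, coeff_add, hXm, hsum, hR]


lemma det_factor (hα : Function.Injective α) (hI : I.card = k) (η : ℕ → ℕ → F) (nk : ℕ)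
    (Gmat : Matrix (Fin k) (Fin n) F)
    (hGmat : ∀ (m : Fin k) (j : Fin n), Gmat m j =
      α j ^ (m : ℕ) + ∑ i ∈ Finset.Icc 1 nk, η (m : ℕ) i * α j ^ (k - 1 + i)) :
    ∃ e : Fin k → Fin n, (∀ c, e c ∈ I) ∧ (∀ i ∈ I, ∃ c, e c = i) ∧
      ∃ V : F, V ≠ 0 ∧ (Gmat.submatrix id e).det =
        (Matrix.of fun m t : Fin k => (if (t : ℕ) + 1 = (m : ℕ) + 1 then 1 else 0) +
          -∑ l ∈ range nk,
            (∑ p ∈ (Icc 1 nk ×ˢ range ((t : ℕ) + 1)).filter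
                (fun p => p.1 + p.2 = ((t : ℕ) + 1) + l),
              η (m : ℕ) p.1 * (∏ j ∈ I, (X - C (α j))).coeff p.2) *
            wsum α I (k - 1 + l)).det * V := by
  classical
  have hmon : (∏ j ∈ I, (X - C (α j))).Monic := prodP_monic
  have hdegP : (∏ j ∈ I, (X - C (α j))).degree = (k : WithBot ℕ) := prodP_degree hI
  set e : Fin k → Fin n := fun c => (I.orderIsoOfFin hI c : Fin n) with he
  have hemem : ∀ c, e c ∈ I := fun c => (I.orderIsoOfFin hI c).2
  have hesurj : ∀ i ∈ I, ∃ c, e c = i := fun i hi =>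
    ⟨(I.orderIsoOfFin hI).symm ⟨i, hi⟩,
      congrArg Subtype.val ((I.orderIsoOfFin hI).apply_symm_apply ⟨i, hi⟩)⟩
  have heinj : Function.Injective (fun c => α (e c)) := by
    intro a b hab
    have h1 : e a = e b := hα hab
    exact (I.orderIsoOfFin hI).injective (Subtype.ext h1)
  refine ⟨e, hemem, hesurj, (Matrix.vandermonde fun c => α (e c)).det,
    Matrix.det_vandermonde_ne_zero_iff.mpr heinj, ?_⟩
  have hfact : Gmat.submatrix id e =
      (Matrix.of fun m t : Fin k => (if (t : ℕ) + 1 = (m : ℕ) + 1 then 1 else 0) +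
          -∑ l ∈ range nk,
            (∑ p ∈ (Icc 1 nk ×ˢ range ((t : ℕ) + 1)).filter
                (fun p => p.1 + p.2 = ((t : ℕ) + 1) + l),
              η (m : ℕ) p.1 * (∏ j ∈ I, (X - C (α j))).coeff p.2) *
            wsum α I (k - 1 + l)) * (Matrix.vandermonde fun c => α (e c))ᵀ := by
    ext m c
    set pm : F[X] := X ^ (m : ℕ) + ∑ i ∈ Icc 1 nk, C (η (m : ℕ) i) * X ^ (k - 1 + i) with hpm
    have hlt : (pm %ₘ ∏ j ∈ I, (X - C (α j))).natDegree < k := by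
      rcases eq_or_ne (pm %ₘ ∏ j ∈ I, (X - C (α j))) 0 with h | h
      · rw [h]; simpa using m.pos
      · exact (natDegree_lt_iff_degree_lt h).mpr (hdegP ▸ degree_modByMonic_lt pm hmon)
    refine Eq.symm ?_
    have h1 : ∀ t : Fin k,
        (if (t : ℕ) + 1 = (m : ℕ) + 1 then (1:F) else 0) +
          -∑ l ∈ range nk,
            (∑ p ∈ (Icc 1 nk ×ˢ range ((t : ℕ) + 1)).filter
                (fun p => p.1 + p.2 = ((t : ℕ) + 1) + l),
              η (m : ℕ) p.1 * (∏ j ∈ I, (X - C (α j))).coeff p.2) *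
            wsum α I (k - 1 + l)
        = (pm %ₘ ∏ j ∈ I, (X - C (α j))).coeff (t : ℕ) :=
      fun t => (entry_coeff hα hI η (m : ℕ) m.isLt t.isLt).symm
    rw [Matrix.mul_apply]
    simp only [Matrix.of_apply, Matrix.transpose_apply, Matrix.vandermonde_apply]
    simp only [h1]
    rw [Fin.sum_univ_eq_sum_range
      (fun t => (pm %ₘ ∏ j ∈ I, (X - C (α j))).coeff t * α (e c) ^ t) k,
      ← eval_eq_sum_range' hlt]
    have hP0 : (∏ j ∈ I, (X - C (α j))).eval (α (e c)) = 0 := by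
      rw [eval_prod]; exact Finset.prod_eq_zero (hemem c) (by simp)
    have h2 : (pm %ₘ ∏ j ∈ I, (X - C (α j))).eval (α (e c)) = pm.eval (α (e c)) := by
      conv_rhs => rw [← modByMonic_add_div pm (∏ j ∈ I, (X - C (α j)))]
      rw [eval_add, eval_mul, hP0, zero_mul, add_zero]
    rw [h2, Matrix.submatrix_apply, id, hGmat m (e c), hpm]
    simp [eval_finset_sum]
  rw [hfact, Matrix.det_mul, Matrix.det_transpose]

end aux


/-- MDS criterion for an A-TGRS code: the code generated by the matrix with entries
`α_j^m + ∑_i η_{m,i} α_j^{k-1+i}` has minimum Hamming weight `≥ n - k + 1` on nonzero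
codewords if and only if the determinant `M(I) = det(δ_{m+1,t} + g_{m,t})` is nonzero
for every `k`-subset `I` of the coordinate set. -/
theorem stmt_14 {F : Type*} [Field F] [Fintype F] [DecidableEq F] {q k n : ℕ}
    (hq : Fintype.card F = q) (hk : 3 ≤ k) (hkn : k < n) (hnq : n ≤ q)
    (α : Fin n → F) (hα : Function.Injective α)
    (η : ℕ → ℕ → F)
    (Gmat : Matrix (Fin k) (Fin n) F)
    (hGmat : ∀ (m : Fin k) (j : Fin n), Gmat m j =
      α j ^ (m : ℕ) + ∑ i ∈ Finset.Icc 1 (n - k), η (m : ℕ) i * α j ^ (k - 1 + i))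
    (w : Finset (Fin n) → ℕ → F)
    (hw : ∀ I t, w I t = ∑ i ∈ I,
      ((Polynomial.derivative (∏ j ∈ I, (X - C (α j)))).eval (α i))⁻¹ * α i ^ t)
    (a : Finset (Fin n) → ℕ → ℕ → ℕ → F)
    (ha : ∀ I m t l, a I m t l =
      ∑ p ∈ (Finset.Icc 1 (n - k) ×ˢ Finset.range t).filter (fun p => p.1 + p.2 = l),
        η m p.1 * (∏ j ∈ I, (X - C (α j)) : F[X]).coeff p.2)
    (g : Finset (Fin n) → ℕ → ℕ → F)
    (hg : ∀ I m t, g I m t =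
      -∑ l ∈ Finset.range (n - k), a I m t (t + l) * w I (k - 1 + l))
    (M : Finset (Fin n) → F)
    (hM : ∀ I, M I = (Matrix.of fun (m t : Fin k) =>
        (if (t : ℕ) + 1 = (m : ℕ) + 1 then 1 else 0) + g I (m : ℕ) ((t : ℕ) + 1)).det) :
    (∀ f : Fin k → F, f ≠ 0 → n - k + 1 ≤ hammingNorm (Matrix.vecMul f Gmat)) ↔
      (∀ I : Finset (Fin n), I.card = k → M I ≠ 0) := by
  classical
  have hMB : ∀ I : Finset (Fin n), M I = (Matrix.of fun m t : Fin k =>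
      (if (t : ℕ) + 1 = (m : ℕ) + 1 then 1 else 0) +
        -∑ l ∈ range (n - k),
          (∑ p ∈ (Icc 1 (n - k) ×ˢ range ((t : ℕ) + 1)).filter
              (fun p => p.1 + p.2 = ((t : ℕ) + 1) + l),
            η (m : ℕ) p.1 * (∏ j ∈ I, (X - C (α j))).coeff p.2) *
          wsum α I (k - 1 + l)).det := by
    intro I
    rw [hM I]
    congr 1
    funext m t
    simp only [Matrix.of_apply]
    congr 1
    rw [hg]
    congr 1
    refine Finset.sum_congr rfl fun l _ => ?_
    rw [ha, hw]
    simp only [wsum]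
  constructor
  · intro hA I hI
    obtain ⟨e, hemem, hesurj, V, hV, hdet⟩ := det_factor hα hI η (n - k) Gmat hGmat
    intro hM0
    have hdet0 : (Gmat.submatrix id e).det = 0 := by
      rw [hdet, ← hMB I, hM0, zero_mul]
    obtain ⟨v, hv0, hvm⟩ := Matrix.exists_vecMul_eq_zero_iff.mpr hdet0
    have hz : ∀ j ∈ I, Matrix.vecMul v Gmat j = 0 := by
      intro j hj
      obtain ⟨c, rfl⟩ := hesurj j hj
      have h1 := congrFun hvm c
      simpa [Matrix.vecMul, dotProduct, Matrix.submatrix_apply] using h1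
    have hle : hammingNorm (Matrix.vecMul v Gmat) ≤ n - k := by
      have hsub : (Finset.univ.filter fun j => Matrix.vecMul v Gmat j ≠ 0) ⊆ Iᶜ := by
        intro j hj
        rw [Finset.mem_compl]
        rw [Finset.mem_filter] at hj
        exact fun hjI => hj.2 (hz j hjI)
      have h2 := Finset.card_le_card hsub
      rw [Finset.card_compl, Fintype.card_fin, hI] at h2
      exact le_trans (le_of_eq rfl) h2
    have := hA v hv0
    omega
  · intro hb f hf
    by_contra hcon
    push_neg at hcon
    have hle : hammingNorm (Matrix.vecMul f Gmat) ≤ n - k := by omega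
    have hZ : k ≤ #(Finset.univ.filter fun j => Matrix.vecMul f Gmat j = 0) := by
      have h1 := Finset.card_filter_add_card_filter_not
        (s := (Finset.univ : Finset (Fin n))) (p := fun j => Matrix.vecMul f Gmat j = 0)
      have h2 : #(Finset.univ.filter fun j => ¬ Matrix.vecMul f Gmat j = 0)
          = hammingNorm (Matrix.vecMul f Gmat) := rfl
      rw [h2, Finset.card_univ, Fintype.card_fin] at h1
      omega
    obtain ⟨I, hIsub, hI⟩ := Finset.exists_subset_card_eq hZ
    obtain ⟨e, hemem, hesurj, V, hV, hdet⟩ := det_factor hα hI η (n - k) Gmat hGmat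
    have hvm : Matrix.vecMul f (Gmat.submatrix id e) = 0 := by
      funext c
      have h3 : Matrix.vecMul f Gmat (e c) = 0 := by
        have := hIsub (hemem c)
        rw [Finset.mem_filter] at this
        exact this.2
      calc Matrix.vecMul f (Gmat.submatrix id e) c = Matrix.vecMul f Gmat (e c) := by
            simp [Matrix.vecMul, dotProduct, Matrix.submatrix_apply]
        _ = 0 := h3
    have hdet0 : (Gmat.submatrix id e).det = 0 :=
      Matrix.exists_vecMul_eq_zero_iff.mp ⟨f, hf, hvm⟩
    rw [hdet, ← hMB I] at hdet0
    rcases mul_eq_zero.mp hdet0 with h | h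
    · exact hb I hI h
    · exact hV h
end

section
/- Let 3 ≤ k < n ≤ q, let α_1,…,α_n be distinct elements of F_q, and let η ∈ F_q^*. Let G be the k×n matrix whose first row has entries 1 + η·α_j^k (1≤j≤n) and whose (m+1)-th row has entries α_j^m for 1≤m≤k−1. Then the following are equivalent: (a) for every nonzero f∈F_q^k, the codeword f·G has Hamming weight at least n−k+1; (b) for every k-subset I of {1,…,n}, η·c_k(I) ≠ 1, where c_k(I) = (−1)^k ∏_{i∈I} α_i is the constant term of G_I(x)=∏_{i∈I}(x−α_i). -/
open Polynomial Finset Matrix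

/-- MDS criterion for the single-twist TGRS code with twist `η x^k` at hook `0`: the code
generated by the matrix with first row `1 + η α_j^k` and remaining rows `α_j^m` is MDS if
and only if `η · c_k(I) ≠ 1` for every `k`-subset `I`, where `c_k(I) = (-1)^k ∏_{i∈I} α_i`. -/
theorem stmt_15 {F : Type*} [Field F] [Fintype F] [DecidableEq F] {q k n : ℕ}
    (hq : Fintype.card F = q) (hk : 3 ≤ k) (hkn : k < n) (hnq : n ≤ q)
    (α : Fin n → F) (hα : Function.Injective α)
    (η : F) (hη : η ≠ 0)
    (Gmat : Matrix (Fin k) (Fin n) F)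
    (hGmat : ∀ (m : Fin k) (j : Fin n), Gmat m j =
      if (m : ℕ) = 0 then 1 + η * α j ^ k else α j ^ (m : ℕ)) :
    (∀ f : Fin k → F, f ≠ 0 → n - k + 1 ≤ hammingNorm (Matrix.vecMul f Gmat)) ↔
      (∀ I : Finset (Fin n), I.card = k → η * ((-1) ^ k * ∏ i ∈ I, α i) ≠ 1) := by
  classical
  haveI : NeZero k := ⟨by omega⟩
  set P : (Fin k → F) → F[X] := fun f =>
    (∑ m : Fin k, C (f m) * X ^ (m : ℕ)) + C (η * f 0) * X ^ k with hPdef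
  -- coefficients of P f below k
  have hcoeff_lt : ∀ (f : Fin k → F) (i : Fin k), (P f).coeff (i : ℕ) = f i := by
    intro f i
    simp only [hPdef, coeff_add, finset_sum_coeff, coeff_C_mul, coeff_X_pow]
    rw [Finset.sum_eq_single i (fun b _ hb => by
      rw [if_neg (fun h => hb (Fin.ext h.symm)), mul_zero])
      (fun h => absurd (Finset.mem_univ i) h)]
    simp [i.isLt.ne]
  -- coefficient of P f at k
  have hcoeff_k : ∀ f : Fin k → F, (P f).coeff k = η * f 0 := by
    intro f
    simp only [hPdef, coeff_add, finset_sum_coeff, coeff_C_mul, coeff_X_pow]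
    rw [Finset.sum_eq_zero fun m _ => by rw [if_neg m.isLt.ne', mul_zero]]
    simp
  -- degree bound
  have hdeg : ∀ f : Fin k → F, (P f).natDegree ≤ k := by
    intro f
    rw [natDegree_le_iff_coeff_eq_zero]
    intro N hN
    simp only [hPdef, coeff_add, finset_sum_coeff, coeff_C_mul, coeff_X_pow]
    rw [Finset.sum_eq_zero fun m _ => by
      rw [if_neg (by have := m.isLt; omega : ¬ N = (m : ℕ)), mul_zero]]
    simp [hN.ne']
  -- nonvanishing
  have hPne : ∀ f : Fin k → F, f ≠ 0 → P f ≠ 0 := by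
    intro f hf h0
    apply hf
    funext i
    have h := hcoeff_lt f i
    rw [h0, coeff_zero] at h
    exact h.symm
  -- codeword entries are evaluations of P f
  have heval : ∀ (f : Fin k → F) (j : Fin n),
      Matrix.vecMul f Gmat j = (P f).eval (α j) := by
    intro f j
    have hrhs : (P f).eval (α j)
        = (∑ m : Fin k, f m * α j ^ (m : ℕ)) + η * f 0 * α j ^ k := by
      simp [hPdef, eval_finset_sum]
    have hlhs : Matrix.vecMul f Gmat j = ∑ m : Fin k, f m * Gmat m j := by
      simp [Matrix.vecMul, dotProduct]
    have hterm : ∀ m : Fin k, f m * Gmat m j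
        = f m * α j ^ (m : ℕ) + (if m = 0 then η * f 0 * α j ^ k else 0) := by
      intro m
      rw [hGmat]
      by_cases hm : m = 0
      · subst hm
        simp only [Fin.val_zero, if_true, reduceIte, pow_zero]
        ring
      · rw [if_neg hm, if_neg (fun h => hm (Fin.ext (by rw [h, Fin.val_zero]))), add_zero]
    rw [hlhs, hrhs, Finset.sum_congr rfl fun m _ => hterm m, Finset.sum_add_distrib,
      Finset.sum_ite_eq' Finset.univ (0 : Fin k) fun _ => η * f 0 * α j ^ k]
    simp
  -- facts about the polynomials ∏ (X - C (α i))
  have hgfacts : ∀ I : Finset (Fin n), I.card = k →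
      (∏ i ∈ I, (X - C (α i))).Monic ∧ (∏ i ∈ I, (X - C (α i))).natDegree = k ∧
      (∏ i ∈ I, (X - C (α i))).coeff 0 = (-1) ^ k * ∏ i ∈ I, α i := by
    intro I hI
    refine ⟨monic_prod_of_monic _ _ fun i _ => monic_X_sub_C _, ?_, ?_⟩
    · rw [natDegree_prod_of_monic _ _ fun i _ => monic_X_sub_C _]
      simp [hI]
    · rw [coeff_zero_eq_eval_zero, eval_prod]
      simp only [eval_sub, eval_X, eval_C, zero_sub]
      rw [Finset.prod_congr rfl (fun i _ => (by ring : -α i = (-1) * α i)),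
        Finset.prod_mul_distrib, Finset.prod_const, hI]
  constructor
  · -- MDS → coefficient condition
    intro hMDS I hI hcontra
    obtain ⟨hgm, hgd, hg0⟩ := hgfacts I hI
    set g : F[X] := ∏ i ∈ I, (X - C (α i)) with hg
    set f : Fin k → F := fun m => g.coeff (m : ℕ) with hf
    have hf0 : f 0 = (-1) ^ k * ∏ i ∈ I, α i := by
      simp only [hf, Fin.val_zero]; exact hg0
    have hfne : f ≠ 0 := by
      intro h0
      rw [h0] at hf0
      rw [← hf0] at hcontra
      simp at hcontra
    have hPg : P f = g := by
      ext i
      rcases lt_trichotomy i k with hi | hi | hi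
      · exact hcoeff_lt f ⟨i, hi⟩
      · subst hi
        have hgk1 : g.coeff i = 1 := by
          have := hgm.coeff_natDegree; rwa [hgd] at this
        rw [hcoeff_k, hf0, hcontra, hgk1]
      · rw [coeff_eq_zero_of_natDegree_lt (lt_of_le_of_lt (hdeg f) hi),
          coeff_eq_zero_of_natDegree_lt (by rw [hgd]; exact hi)]
    have hweight := hMDS f hfne
    have hsubset : ({j | Matrix.vecMul f Gmat j ≠ 0} : Finset (Fin n)) ⊆ Finset.univ \ I := by
      intro j hj
      simp only [Finset.mem_filter] at hj
      rw [Finset.mem_sdiff]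
      refine ⟨Finset.mem_univ j, fun hjI => hj.2 ?_⟩
      rw [heval, hPg, hg, eval_prod]
      exact Finset.prod_eq_zero hjI (by simp)
    have hcard : hammingNorm (Matrix.vecMul f Gmat) ≤ n - k := by
      have := Finset.card_le_card hsubset
      rwa [Finset.card_sdiff_of_subset (Finset.subset_univ I), Finset.card_univ, Fintype.card_fin,
        hI] at this
    omega
  · -- coefficient condition → MDS
    intro hb f hf
    by_contra hw
    push_neg at hw
    have hwle : hammingNorm (Matrix.vecMul f Gmat) ≤ n - k := by omega
    set Z : Finset (Fin n) := {j | Matrix.vecMul f Gmat j = 0} with hZ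
    have hZcard : k ≤ Z.card := by
      have h1 := Finset.card_filter_add_card_filter_not
        (s := (Finset.univ : Finset (Fin n))) (p := fun j => Matrix.vecMul f Gmat j = 0)
      have h2 : hammingNorm (Matrix.vecMul f Gmat)
          = (Finset.univ.filter fun j => ¬ Matrix.vecMul f Gmat j = 0).card := rfl
      rw [Finset.card_univ, Fintype.card_fin] at h1
      have h3 : Z.card = (Finset.univ.filter fun j => Matrix.vecMul f Gmat j = 0).card := rfl
      omega
    obtain ⟨I, hIZ, hIcard⟩ := Finset.exists_subset_card_eq hZcard
    obtain ⟨hgm, hgd, hg0⟩ := hgfacts I hIcard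
    set g : F[X] := ∏ i ∈ I, (X - C (α i)) with hg
    set r : F[X] := P f - C (η * f 0) * g with hr
    have hgk : g.coeff k = 1 := by
      have := hgm.coeff_natDegree; rwa [hgd] at this
    have hrk : r.coeff k = 0 := by
      rw [hr, coeff_sub, hcoeff_k, coeff_C_mul, hgk, mul_one, sub_self]
    have hrdeg : r.natDegree ≤ k :=
      le_trans (natDegree_sub_le _ _)
        (max_le (hdeg f) (le_trans (natDegree_C_mul_le _ _) hgd.le))
    have hroots : ∀ i ∈ I, r.eval (α i) = 0 := by
      intro i hi
      have hz : Matrix.vecMul f Gmat i = 0 := by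
        have := hIZ hi
        simp only [hZ, Finset.mem_filter] at this
        exact this.2
      have hPz : (P f).eval (α i) = 0 := by rw [← heval]; exact hz
      have hgz : g.eval (α i) = 0 := by
        rw [hg, eval_prod]
        exact Finset.prod_eq_zero hi (by simp)
      rw [hr]
      simp [hPz, hgz]
    have hr0 : r = 0 := by
      by_contra hrne
      have hsub : (I.image α).val ≤ r.roots := by
        rw [Multiset.le_iff_subset (I.image α).nodup]
        intro x hx
        rw [Finset.mem_val, Finset.mem_image] at hx
        obtain ⟨i, hi, rfl⟩ := hx
        exact (mem_roots hrne).mpr (hroots i hi)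
      have hc1 : (I.image α).card ≤ Multiset.card r.roots := by
        have := Multiset.card_le_card hsub
        exact this
      have hc2 : (I.image α).card = k := by
        rw [Finset.card_image_of_injOn hα.injOn, hIcard]
      have hdk : r.natDegree = k :=
        le_antisymm hrdeg (by
          calc k = (I.image α).card := hc2.symm
            _ ≤ Multiset.card r.roots := hc1
            _ ≤ r.natDegree := r.card_roots')
      have : r.leadingCoeff = 0 := by
        rw [Polynomial.leadingCoeff, hdk, hrk]
      exact hrne (leadingCoeff_eq_zero.mp this)
    have hfactor : P f = C (η * f 0) * g := by
      have := sub_eq_zero.mp hr0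
      exact this
    have hcoeff0 : f 0 = η * f 0 * ((-1) ^ k * ∏ i ∈ I, α i) := by
      have h := hcoeff_lt f 0
      rw [Fin.val_zero, hfactor, coeff_C_mul, hg0] at h
      exact h.symm
    by_cases hf0 : f 0 = 0
    · apply hPne f hf
      rw [hfactor, hf0, mul_zero, map_zero, zero_mul]
    · apply hb I hIcard
      have : f 0 * (η * ((-1) ^ k * ∏ i ∈ I, α i)) = f 0 * 1 := by
        rw [mul_one]
        calc f 0 * (η * ((-1) ^ k * ∏ i ∈ I, α i))
            = η * f 0 * ((-1) ^ k * ∏ i ∈ I, α i) := by ring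
          _ = f 0 := hcoeff0.symm
      exact (mul_left_cancel₀ hf0 this)
end

section
/- Let 3 ≤ k < n ≤ q−1, let α_1,…,α_n be distinct elements of F_q^*, and let η ∈ F_q^*. Let G be the k×n matrix whose m-th row has entries α_j^m for 0≤m≤k−2 and whose last row has entries α_j^{k−1} + η·α_j^{q−2} (1≤j≤n). Then the following are equivalent: (a) for every nonzero f∈F_q^k, the codeword f·G has Hamming weight at least n−k+1; (b) for every k-subset I of {1,…,n}, η ≠ c_k(I), where c_k(I)=(−1)^k ∏_{i∈I} α_i is the constant term of G_I(x)=∏_{i∈I}(x−α_i). -/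
open Polynomial Finset Matrix

/-- MDS criterion for the single-twist TGRS code with twist `η x^{q-2}` at hook `k-1`
(over nonzero evaluation points): the code generated by the matrix with rows `α_j^m`
(`0 ≤ m ≤ k-2`) and last row `α_j^{k-1} + η α_j^{q-2}` is MDS if and only if
`η ≠ c_k(I) = (-1)^k ∏_{i∈I} α_i` for every `k`-subset `I`. -/
theorem stmt_16 {F : Type*} [Field F] [Fintype F] [DecidableEq F] {q k n : ℕ}
    (hq : Fintype.card F = q) (hk : 3 ≤ k) (hkn : k < n) (hnq : n ≤ q - 1)
    (α : Fin n → F) (hα : Function.Injective α) (hα0 : ∀ i, α i ≠ 0)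
    (η : F) (hη : η ≠ 0)
    (Gmat : Matrix (Fin k) (Fin n) F)
    (hGmat : ∀ (m : Fin k) (j : Fin n), Gmat m j =
      if (m : ℕ) = k - 1 then α j ^ (k - 1) + η * α j ^ (q - 2) else α j ^ (m : ℕ)) :
    (∀ f : Fin k → F, f ≠ 0 → n - k + 1 ≤ hammingNorm (Matrix.vecMul f Gmat)) ↔
      (∀ I : Finset (Fin n), I.card = k → η ≠ (-1) ^ k * ∏ i ∈ I, α i) := by
  have hq5 : 5 ≤ q := by omega
  set mlast : Fin k := ⟨k - 1, by omega⟩ with hml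
  have hmlv : (mlast : ℕ) = k - 1 := rfl
  have hpow : ∀ x : F, x ≠ 0 → x ^ (q - 2) * x = 1 := by
    intro x hx
    have h1 : x ^ (Fintype.card F - 1) = 1 := FiniteField.pow_card_sub_one_eq_one x hx
    rw [hq] at h1
    calc x ^ (q - 2) * x = x ^ (q - 2 + 1) := (pow_succ x (q - 2)).symm
      _ = x ^ (q - 1) := by congr 1; omega
      _ = 1 := h1
  set Q : (Fin k → F) → F[X] :=
    fun f => C (η * f mlast) + ∑ m : Fin k, C (f m) * X ^ ((m : ℕ) + 1) with hQdef
  -- key evaluation identity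
  have hkey : ∀ (f : Fin k → F) (j : Fin n),
      α j * Matrix.vecMul f Gmat j = (Q f).eval (α j) := by
    intro f j
    have hterm : ∀ m : Fin k, f m * (α j * Gmat m j)
        = f m * α j ^ ((m : ℕ) + 1) + (if m = mlast then η * f m else 0) := by
      intro m
      rw [hGmat]
      by_cases hm : (m : ℕ) = k - 1
      · have hmm : m = mlast := Fin.val_injective (hm.trans hmlv.symm)
        rw [if_pos hm, if_pos hmm, pow_succ, hm]
        have hu := hpow (α j) (hα0 j)
        linear_combination (f m * η) * hu
      · have hmm : m ≠ mlast := fun h => hm (by rw [h])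
        rw [if_neg hm, if_neg hmm, pow_succ]
        ring
    have hv : Matrix.vecMul f Gmat j = ∑ m : Fin k, f m * Gmat m j := by
      simp [Matrix.vecMul, dotProduct]
    rw [hv, Finset.mul_sum]
    have : ∑ m : Fin k, α j * (f m * Gmat m j) = ∑ m : Fin k, f m * (α j * Gmat m j) := by
      apply Finset.sum_congr rfl; intro m _; ring
    rw [this, Finset.sum_congr rfl fun m _ => hterm m, Finset.sum_add_distrib,
      Finset.sum_ite_eq' Finset.univ mlast (fun m => η * f m)]
    simp [hQdef, eval_finset_sum]
    ring
  -- coefficients of Q f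
  have hc0 : ∀ f : Fin k → F, (Q f).coeff 0 = η * f mlast := by
    intro f
    simp [hQdef, finset_sum_coeff, coeff_X_pow]
  have hcs : ∀ (f : Fin k → F) (m : Fin k), (Q f).coeff ((m : ℕ) + 1) = f m := by
    intro f m
    rw [hQdef]
    simp only [coeff_add, finset_sum_coeff, coeff_C_mul, coeff_X_pow, coeff_C,
      Nat.succ_ne_zero, if_false, zero_add]
    rw [Finset.sum_eq_single m]
    · simp
    · intro b _ hb
      rw [if_neg, mul_zero]
      intro h
      exact hb (Fin.ext (by omega))
    · intro h; exact absurd (Finset.mem_univ m) h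
  have hdeg : ∀ f : Fin k → F, (Q f).natDegree ≤ k := by
    intro f
    refine le_trans (natDegree_add_le _ _)
      (max_le (by rw [natDegree_C]; exact Nat.zero_le _) ?_)
    refine natDegree_sum_le_of_forall_le _ _ fun m _ => ?_
    refine le_trans (natDegree_mul_le) ?_
    simp [natDegree_X_pow]
  have hdeg' : ∀ f : Fin k → F, f mlast = 0 → (Q f).natDegree ≤ k - 1 := by
    intro f hf
    refine le_trans (natDegree_add_le _ _)
      (max_le (by rw [natDegree_C]; exact Nat.zero_le _) ?_)
    refine natDegree_sum_le_of_forall_le _ _ fun m _ => ?_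
    by_cases hm : m = mlast
    · simp [hm, hf]
    · refine le_trans (natDegree_mul_le) ?_
      simp [natDegree_X_pow]
      have : (m : ℕ) ≠ k - 1 := fun h => hm (Fin.val_injective (h.trans hmlv.symm))
      omega
  -- root counting
  have hroots : ∀ p : F[X], p ≠ 0 → ∀ s : Finset F, (∀ x ∈ s, p.eval x = 0) →
      s.card ≤ p.natDegree := by
    intro p hp s hs
    have h1 : s ⊆ p.roots.toFinset := by
      intro x hx
      exact Multiset.mem_toFinset.2 ((mem_roots hp).2 (hs x hx))
    calc s.card ≤ p.roots.toFinset.card := Finset.card_le_card h1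
      _ ≤ Multiset.card p.roots := Multiset.toFinset_card_le _
      _ ≤ p.natDegree := p.card_roots'
  -- the product polynomial
  have hPc0 : ∀ I : Finset (Fin n),
      (∏ i ∈ I, (X - C (α i))).coeff 0 = (-1) ^ I.card * ∏ i ∈ I, α i := by
    intro I
    rw [coeff_zero_eq_eval_zero, eval_prod]
    simp only [eval_sub, eval_X, eval_C, zero_sub]
    have h1 : ∏ x ∈ I, -α x = ∏ x ∈ I, (-1) * α x := Finset.prod_congr rfl fun i _ => by ring
    rw [h1, Finset.prod_mul_distrib, Finset.prod_const]
  have hPd : ∀ I : Finset (Fin n), (∏ i ∈ I, (X - C (α i))).natDegree = I.card := by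
    intro I
    rw [natDegree_prod _ _ fun i _ => X_sub_C_ne_zero _]
    simp
  have hPm : ∀ I : Finset (Fin n), (∏ i ∈ I, (X - C (α i))).Monic :=
    fun I => monic_prod_of_monic _ _ fun i _ => monic_X_sub_C _
  constructor
  · -- MDS → condition on I
    intro hMDS I hI hbad
    set P : F[X] := ∏ i ∈ I, (X - C (α i)) with hP
    set f : Fin k → F := fun m => if (m : ℕ) = k - 1 then 1 else P.coeff ((m : ℕ) + 1)
      with hfdef
    have hfl : f mlast = 1 := by simp [hfdef, hmlv]
    have hf0 : f ≠ 0 := by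
      intro h
      have := congrFun h mlast
      rw [hfl] at this
      exact one_ne_zero this
    have hQP : Q f = P := by
      ext t
      rcases Nat.eq_zero_or_pos t with ht | ht
      · subst ht
        rw [hc0 f, hfl, mul_one, hPc0 I, hI]
        exact hbad
      · by_cases htk : t ≤ k
        · have hm : t - 1 < k := by omega
          have h1 : ((⟨t - 1, hm⟩ : Fin k) : ℕ) + 1 = t := by simp; omega
          have h2 := hcs f ⟨t - 1, hm⟩
          rw [h1] at h2
          rw [h2]
          by_cases h3 : t - 1 = k - 1
          · have h4 : t = k := by omega
            have h5 : P.coeff k = 1 := by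
              have := (hPm I).coeff_natDegree
              rwa [hPd I, hI] at this
            simp only [hfdef]
            rw [if_pos h3, h4, h5]
          · simp only [hfdef]
            rw [if_neg h3, show t - 1 + 1 = t from by omega]
        · rw [coeff_eq_zero_of_natDegree_lt (lt_of_le_of_lt (hdeg f) (by omega)),
            coeff_eq_zero_of_natDegree_lt (by rw [hPd I, hI]; omega)]
    have hcz : ∀ j ∈ I, Matrix.vecMul f Gmat j = 0 := by
      intro j hj
      have h1 := hkey f j
      rw [hQP] at h1
      have h2 : P.eval (α j) = 0 := by
        rw [hP, eval_prod]
        exact Finset.prod_eq_zero hj (by simp)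
      rw [h2] at h1
      exact (mul_eq_zero.mp h1).resolve_left (hα0 j)
    have hnorm : hammingNorm (Matrix.vecMul f Gmat) ≤ n - k := by
      have hsub : ({j | Matrix.vecMul f Gmat j ≠ 0} : Finset (Fin n)) ⊆ Finset.univ \ I := by
        intro j hj
        simp only [Finset.mem_filter, Finset.mem_univ, Finset.mem_sdiff, true_and,
          Finset.mem_filter] at hj ⊢
        intro hjI
        exact hj (hcz j hjI)
      calc hammingNorm (Matrix.vecMul f Gmat)
          ≤ (Finset.univ \ I).card := Finset.card_le_card hsub
        _ = n - k := by rw [Finset.card_sdiff_of_subset (Finset.subset_univ I), hI, Finset.card_univ,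
            Fintype.card_fin]
    have := hMDS f hf0
    omega
  · -- condition on I → MDS
    intro hgood f hf0
    by_contra hlt
    push_neg at hlt
    have hnorm : hammingNorm (Matrix.vecMul f Gmat) ≤ n - k := by omega
    have hZcard : k ≤ ({j | Matrix.vecMul f Gmat j = 0} : Finset (Fin n)).card := by
      have h1 := Finset.card_filter_add_card_filter_not
        (s := (Finset.univ : Finset (Fin n))) (p := fun j => Matrix.vecMul f Gmat j = 0)
      rw [Finset.card_univ, Fintype.card_fin] at h1
      have h2 : (Finset.filter (fun j => ¬ Matrix.vecMul f Gmat j = 0) Finset.univ).card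
          = hammingNorm (Matrix.vecMul f Gmat) := rfl
      omega
    obtain ⟨I, hIZ, hI⟩ := Finset.exists_subset_card_eq hZcard
    have hIz : ∀ j ∈ I, Matrix.vecMul f Gmat j = 0 := by
      intro j hj
      have := hIZ hj
      simpa using this
    have hQz : ∀ j ∈ I, (Q f).eval (α j) = 0 := by
      intro j hj
      rw [← hkey f j, hIz j hj, mul_zero]
    by_cases hfl : f mlast = 0
    · -- impossible: too many roots
      obtain ⟨m, hm⟩ : ∃ m, f m ≠ 0 := by
        by_contra h
        push_neg at h
        exact hf0 (funext h)
      have hQne : Q f ≠ 0 := by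
        intro h
        apply hm
        have := hcs f m
        rw [h, coeff_zero] at this
        exact this.symm
      have hcard : (insert (0 : F) (I.image α)).card = k + 1 := by
        rw [Finset.card_insert_of_notMem, Finset.card_image_of_injective _ hα, hI]
        intro hx
        obtain ⟨j, _, hj⟩ := Finset.mem_image.mp hx
        exact hα0 j hj
      have hle : (insert (0 : F) (I.image α)).card ≤ (Q f).natDegree := by
        apply hroots _ hQne
        intro x hx
        rcases Finset.mem_insert.mp hx with rfl | hx
        · rw [← coeff_zero_eq_eval_zero, hc0, hfl, mul_zero]
        · obtain ⟨j, hj, rfl⟩ := Finset.mem_image.mp hx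
          exact hQz j hj
      have := hdeg' f hfl
      omega
    · set P : F[X] := ∏ i ∈ I, (X - C (α i)) with hP
      have hPck : P.coeff k = 1 := by
        have := (hPm I).coeff_natDegree
        rwa [hPd I, hI] at this
      have hQck : (Q f).coeff k = f mlast := by
        have := hcs f mlast
        rwa [hmlv, show k - 1 + 1 = k by omega] at this
      set D : F[X] := Q f - C (f mlast) * P with hD
      have hD0 : D = 0 := by
        by_contra hDne
        have hdD : D.natDegree ≤ k := by
          refine le_trans (natDegree_sub_le _ _) (max_le (hdeg f) ?_)
          refine le_trans natDegree_mul_le ?_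
          rw [natDegree_C, hPd I, hI]
          omega
        have hDk : D.coeff k = 0 := by
          rw [hD, coeff_sub, coeff_C_mul, hQck, hPck, mul_one, sub_self]
        have hdD' : D.natDegree < k := by
          rcases lt_or_eq_of_le hdD with h | h
          · exact h
          · exact absurd (show D.leadingCoeff = 0 by
                rw [Polynomial.leadingCoeff, h]; exact hDk) (leadingCoeff_ne_zero.mpr hDne)
        have hle : (I.image α).card ≤ D.natDegree := by
          apply hroots _ hDne
          intro x hx
          obtain ⟨j, hj, rfl⟩ := Finset.mem_image.mp hx
          have hPz : P.eval (α j) = 0 := by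
            rw [hP, eval_prod]
            exact Finset.prod_eq_zero hj (by simp)
          rw [hD, eval_sub, eval_mul, hPz, hQz j hj, mul_zero, sub_zero]
        rw [Finset.card_image_of_injective _ hα, hI] at hle
        omega
      have hQfP : Q f = C (f mlast) * P :=
        sub_eq_zero.mp (hD ▸ hD0)
      have h0 : η * f mlast = f mlast * ((-1) ^ k * ∏ i ∈ I, α i) := by
        have := congrArg (fun p => Polynomial.coeff p 0) hQfP
        rw [hc0, coeff_C_mul] at this
        rw [this, hPc0 I, hI]
      have : η = (-1) ^ k * ∏ i ∈ I, α i := by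
        have h1 : f mlast * η = f mlast * ((-1) ^ k * ∏ i ∈ I, α i) := by
          rw [mul_comm (f mlast) η]; exact h0
        exact mul_left_cancel₀ hfl h1
      exact hgood I hI this
end

section
/- Let 3 ≤ k < n ≤ q, let α_1,…,α_n be distinct elements of F_q, and let η ∈ F_q^*. Let G be the k×n matrix whose m-th row has entries α_j^m for 0≤m≤k−2 and whose last row has entries α_j^{k−1} + η·α_j^k (1≤j≤n). Then the following are equivalent: (a) for every nonzero f∈F_q^k, the codeword f·G has Hamming weight at least n−k+1; (b) for every k-subset I of {1,…,n}, η·c_1(I) ≠ 1, where c_1(I) = −∑_{i∈I} α_i is the coefficient of x^{k−1} in G_I(x)=∏_{i∈I}(x−α_i). -/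
open Polynomial Finset Matrix

private noncomputable def Pf {F : Type*} [Field F] {k : ℕ} (hk1 : 1 ≤ k) (η : F)
    (f : Fin k → F) : F[X] :=
  (∑ m : Fin k, C (f m) * X ^ (m : ℕ)) + C (η * f ⟨k - 1, by omega⟩) * X ^ k

private lemma Pf_coeff {F : Type*} [Field F] {k : ℕ} (hk1 : 1 ≤ k) (η : F)
    (f : Fin k → F) (j : ℕ) :
    (Pf hk1 η f).coeff j =
      (if h : j < k then f ⟨j, h⟩ else 0) + (if j = k then η * f ⟨k - 1, by omega⟩ else 0) := by
  rw [Pf, coeff_add, finset_sum_coeff]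
  simp_rw [coeff_C_mul, coeff_X_pow, mul_ite, mul_one, mul_zero]
  congr 1
  by_cases h : j < k
  · rw [dif_pos h]
    calc (∑ m : Fin k, if j = (m : ℕ) then f m else 0)
        = ∑ m : Fin k, (if (⟨j, h⟩ : Fin k) = m then f m else 0) := by
          refine Finset.sum_congr rfl fun m _ => ?_
          congr 1
          exact propext ⟨fun hm => Fin.ext hm, fun hm => congrArg Fin.val hm⟩
      _ = f ⟨j, h⟩ := by rw [Finset.sum_ite_eq]; simp
  · rw [dif_neg h]
    apply Finset.sum_eq_zero
    intro m _
    rw [if_neg]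
    omega

private lemma Pf_eval {F : Type*} [Field F] {k : ℕ} (hk1 : 1 ≤ k) (η : F)
    (f : Fin k → F) (a : F) :
    (Pf hk1 η f).eval a = (∑ m : Fin k, f m * a ^ (m : ℕ)) + η * f ⟨k - 1, by omega⟩ * a ^ k := by
  simp [Pf, eval_finset_sum]

/-- MDS criterion for the single-twist TGRS code with twist `η x^k` at hook `k-1`: the
code generated by the matrix with rows `α_j^m` (`0 ≤ m ≤ k-2`) and last row
`α_j^{k-1} + η α_j^k` is MDS if and only if `η · c_1(I) ≠ 1` for every `k`-subset `I`,
where `c_1(I) = -∑_{i∈I} α_i`. -/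
theorem stmt_17 {F : Type*} [Field F] [Fintype F] [DecidableEq F] {q k n : ℕ}
    (hq : Fintype.card F = q) (hk : 3 ≤ k) (hkn : k < n) (hnq : n ≤ q)
    (α : Fin n → F) (hα : Function.Injective α)
    (η : F) (hη : η ≠ 0)
    (Gmat : Matrix (Fin k) (Fin n) F)
    (hGmat : ∀ (m : Fin k) (j : Fin n), Gmat m j =
      if (m : ℕ) = k - 1 then α j ^ (k - 1) + η * α j ^ k else α j ^ (m : ℕ)) :
    (∀ f : Fin k → F, f ≠ 0 → n - k + 1 ≤ hammingNorm (Matrix.vecMul f Gmat)) ↔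
      (∀ I : Finset (Fin n), I.card = k → η * (-∑ i ∈ I, α i) ≠ 1) := by
  have hk1 : 1 ≤ k := by omega
  -- the codeword coordinates are polynomial evaluations
  have key : ∀ (f : Fin k → F) (j : Fin n),
      Matrix.vecMul f Gmat j = (Pf hk1 η f).eval (α j) := by
    intro f j
    rw [Pf_eval]
    have hv : Matrix.vecMul f Gmat j = ∑ m : Fin k, f m * Gmat m j := by
      simp [Matrix.vecMul, dotProduct]
    rw [hv]
    have hterm : ∀ m : Fin k, f m * Gmat m j
        = f m * α j ^ (m : ℕ) +
          (if m = (⟨k - 1, by omega⟩ : Fin k) then η * f m * α j ^ k else 0) := by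
      intro m
      rw [hGmat]
      by_cases hm : (m : ℕ) = k - 1
      · rw [if_pos hm, if_pos (Fin.ext hm)]
        rw [show α j ^ (m : ℕ) = α j ^ (k - 1) by rw [hm]]
        ring
      · rw [if_neg hm, if_neg (fun h => hm (congrArg Fin.val h))]
        ring
    rw [Finset.sum_congr rfl fun m _ => hterm m, Finset.sum_add_distrib,
      Finset.sum_ite_eq' Finset.univ (⟨k - 1, by omega⟩ : Fin k)
        (fun m => η * f m * α j ^ k)]
    simp
  constructor
  · -- (a) → (b)
    intro hMDS I hI
    by_contra hbad

    set Q : F[X] := ∏ i ∈ I, (X - C (α i)) with hQdef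
    have hQmonic : Q.Monic := monic_prod_of_monic _ _ fun _ _ => monic_X_sub_C _
    have hQdeg : Q.natDegree = k := by
      rw [hQdef, natDegree_prod _ _ (fun i _ => X_sub_C_ne_zero (α i))]
      simp [natDegree_X_sub_C, hI]
    have hQc1 : Q.coeff (k - 1) = -∑ i ∈ I, α i := by
      have := prod_X_sub_C_coeff_card_pred I α (by rw [hI]; omega)
      rwa [hI] at this
    have hQck : Q.coeff k = 1 := by
      have := hQmonic.coeff_natDegree
      rwa [hQdeg] at this
    set P0 : F[X] := C η * Q with hP0def
    have hP0deg : P0.natDegree = k := by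
      rw [hP0def, natDegree_C_mul hη, hQdeg]
    have hP0c1 : P0.coeff (k - 1) = 1 := by
      rw [hP0def, coeff_C_mul, hQc1, hbad]
    have hP0ck : P0.coeff k = η := by
      rw [hP0def, coeff_C_mul, hQck, mul_one]
    set f : Fin k → F := fun m => P0.coeff (m : ℕ) with hfdef
    have hfk : f ⟨k - 1, by omega⟩ = 1 := hP0c1
    have hPfP0 : Pf hk1 η f = P0 := by
      ext j
      rw [Pf_coeff]
      by_cases hj : j < k
      · rw [dif_pos hj, if_neg (by omega), add_zero]
      · rw [dif_neg hj]
        by_cases hjk : j = k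
        · rw [if_pos hjk, hfk, mul_one, zero_add, hjk, hP0ck]
        · rw [if_neg hjk, add_zero,
            coeff_eq_zero_of_natDegree_lt (by omega : P0.natDegree < j)]
    have hfne : f ≠ 0 := by
      intro h
      have := congrFun h ⟨k - 1, by omega⟩
      rw [hfk] at this
      exact one_ne_zero this
    have hvanish : ∀ j ∈ I, Matrix.vecMul f Gmat j = 0 := by
      intro j hj
      rw [key, hPfP0, hP0def, eval_mul, eval_prod]
      have : ∏ i ∈ I, eval (α j) (X - C (α i)) = 0 :=
        Finset.prod_eq_zero hj (by simp)
      rw [this, mul_zero]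
    have hsub : Finset.univ.filter (fun j => Matrix.vecMul f Gmat j ≠ 0) ⊆ Iᶜ := by
      intro j hj
      rw [Finset.mem_filter] at hj
      rw [Finset.mem_compl]
      intro hjI
      exact hj.2 (hvanish j hjI)
    have hwt : hammingNorm (Matrix.vecMul f Gmat) ≤ n - k := by
      have h1 : hammingNorm (Matrix.vecMul f Gmat)
          = (Finset.univ.filter (fun j => Matrix.vecMul f Gmat j ≠ 0)).card := rfl
      rw [h1]
      calc (Finset.univ.filter (fun j => Matrix.vecMul f Gmat j ≠ 0)).card
          ≤ Iᶜ.card := Finset.card_le_card hsub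
        _ = n - k := by rw [Finset.card_compl, hI, Fintype.card_fin]
    have := hMDS f hfne
    omega
  · -- (b) → (a)
    intro hb f hf
    set P : F[X] := Pf hk1 η f with hPdef
    have hPne : P ≠ 0 := by
      obtain ⟨m, hm⟩ := Function.ne_iff.mp hf
      intro h
      have hc : P.coeff (m : ℕ) = 0 := by rw [h]; simp
      rw [hPdef, Pf_coeff, dif_pos m.isLt, if_neg (by omega), add_zero] at hc
      exact hm (by simpa using hc)
    set Z : Finset (Fin n) := Finset.univ.filter (fun j => P.eval (α j) = 0) with hZdef
    have hZroots : (Z.image α).val ⊆ P.roots := by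
      intro a ha
      rw [Finset.mem_val, Finset.mem_image] at ha
      obtain ⟨j, hj, rfl⟩ := ha
      rw [hZdef, Finset.mem_filter] at hj
      rw [mem_roots hPne]
      exact hj.2
    have hZcard_le : Z.card ≤ P.natDegree := by
      rw [← Finset.card_image_of_injective Z hα]
      exact card_le_degree_of_subset_roots hZroots
    have hdegle : P.natDegree ≤ k := by
      rw [natDegree_le_iff_coeff_eq_zero]
      intro N hN
      rw [hPdef, Pf_coeff, dif_neg (by omega), if_neg (by omega), add_zero]
    have hnorm : hammingNorm (Matrix.vecMul f Gmat) = n - Z.card := by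
      have h1 : hammingNorm (Matrix.vecMul f Gmat)
          = (Finset.univ.filter (fun j => Matrix.vecMul f Gmat j ≠ 0)).card := rfl
      have h2 : Finset.univ.filter (fun j => Matrix.vecMul f Gmat j ≠ 0)
          = Finset.univ.filter (fun j => ¬ P.eval (α j) = 0) := by
        apply Finset.filter_congr
        intro j _
        rw [key]
      have h3 := Finset.card_filter_add_card_filter_not
        (s := (Finset.univ : Finset (Fin n))) (p := fun j => P.eval (α j) = 0)
      rw [Finset.card_univ, Fintype.card_fin] at h3
      rw [h1, h2, hZdef]
      omega
    rw [hnorm]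
    suffices hZk : Z.card ≤ k - 1 by omega
    by_contra hZ
    push_neg at hZ
    have hfk : f ⟨k - 1, by omega⟩ ≠ 0 := by
      intro hfk0
      have hdegle' : P.natDegree ≤ k - 2 := by
        rw [natDegree_le_iff_coeff_eq_zero]
        intro N hN
        rw [hPdef, Pf_coeff]
        by_cases hNk : N < k
        · rw [dif_pos hNk, if_neg (by omega : ¬ N = k), add_zero]
          have hN1 : (⟨N, hNk⟩ : Fin k) = ⟨k - 1, by omega⟩ :=
            Fin.ext (show N = k - 1 by omega)
          rw [hN1]
          exact hfk0
        · rw [dif_neg hNk]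
          by_cases hNk' : N = k
          · rw [if_pos hNk', zero_add, hfk0, mul_zero]
          · rw [if_neg hNk', add_zero]
      omega
    -- now natDegree P = k and Z.card = k
    have hck : P.coeff k = η * f ⟨k - 1, by omega⟩ := by
      show (Pf hk1 η f).coeff k = _
      rw [Pf_coeff, dif_neg (by omega : ¬ k < k), if_pos rfl, zero_add]
    have hdeg : P.natDegree = k := by
      have : k ≤ P.natDegree := le_natDegree_of_ne_zero (by rw [hck]; exact mul_ne_zero hη hfk)
      omega
    have hZk : Z.card = k := by omega
    set s : Finset F := Z.image α with hsdef
    have hscard : s.card = k := by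
      rw [hsdef, Finset.card_image_of_injective Z hα, hZk]
    set Q : F[X] := ∏ a ∈ s, (X - C a) with hQdef
    have hQmonic : Q.Monic := monic_prod_of_monic _ _ fun _ _ => monic_X_sub_C _
    have hQdeg : Q.natDegree = k := by
      rw [hQdef, natDegree_prod _ _ (fun a _ => X_sub_C_ne_zero a)]
      simp [natDegree_X_sub_C, hscard]
    have hdvd : Q ∣ P := by
      refine dvd_trans ?_ (prod_multiset_X_sub_C_dvd P)
      rw [hQdef, Finset.prod_eq_multiset_prod]
      exact Multiset.prod_dvd_prod_of_le
        (Multiset.map_le_map (Finset.val_le_iff_val_subset.2 hZroots))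
    obtain ⟨R, hR⟩ := hdvd
    have hRne : R ≠ 0 := by
      intro h; rw [h, mul_zero] at hR; exact hPne hR
    have hRdeg : R.natDegree = 0 := by
      have := natDegree_mul hQmonic.ne_zero hRne
      rw [← hR, hdeg, hQdeg] at this
      omega
    have hRC : R = C (R.coeff 0) := eq_C_of_natDegree_eq_zero hRdeg
    have hQck : Q.coeff k = 1 := by
      have := hQmonic.coeff_natDegree
      rwa [hQdeg] at this
    have hQc1 : Q.coeff (k - 1) = -∑ a ∈ s, a := by
      have := prod_X_sub_C_coeff_card_pred s (fun a => a) (by rw [hscard]; omega)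
      rwa [hscard] at this
    have hPc : ∀ d, P.coeff d = Q.coeff d * R.coeff 0 := by
      intro d
      conv_lhs => rw [hR, hRC]
      rw [coeff_mul_C]
    have hc : R.coeff 0 = η * f ⟨k - 1, by omega⟩ := by
      have := hPc k
      rw [hck, hQck, one_mul] at this
      exact this.symm
    have hPc1 : P.coeff (k - 1) = f ⟨k - 1, by omega⟩ := by
      show (Pf hk1 η f).coeff (k - 1) = _
      rw [Pf_coeff, dif_pos (by omega : k - 1 < k), if_neg (by omega : ¬ k - 1 = k), add_zero]
    have heq : f ⟨k - 1, by omega⟩ = (-∑ a ∈ s, a) * (η * f ⟨k - 1, by omega⟩) := by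
      rw [← hc, ← hQc1, ← hPc (k - 1)]
      exact hPc1.symm
    have hsum : ∑ a ∈ s, a = ∑ j ∈ Z, α j := by
      rw [hsdef]
      exact Finset.sum_image (fun x _ y _ h => hα h)
    have hfinal : η * (-∑ j ∈ Z, α j) = 1 := by
      have h2 : (η * (-∑ j ∈ Z, α j)) * f ⟨k - 1, by omega⟩ = 1 * f ⟨k - 1, by omega⟩ := by
        rw [one_mul, ← hsum]
        linear_combination -heq
      exact mul_right_cancel₀ hfk h2
    exact hb Z hZk hfinal
end
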